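/- arXiv:1805.05485 — 8 statements merged into one kernel-verified Lean document; each statement's English description precedes it below -/
import Mathlib

section
/- Let G=(V,D,B) be a mixed graph on V={1,...,p} whose connected components (formed using edges of both types) have vertex sets V_1,...,V_k, so that V_1,...,V_k partition V and no edge of D or B joins two different parts. Then every Σ ∈ PD(G) satisfies Σ_{ij}=0 whenever i and j lie in different parts, and for every positive semidefinite p×p matrix S, the supremum in the extended reals satisfies sup_{Σ ∈ PD(G)} ℓ(Σ|S) = Σ_{j=1}^k sup_{Σ_j ∈ PD(G_j)} ℓ(Σ_j | S_{V_j,V_j}), where G_j is the subgraph of G induced on V_j and S_{V_j,V_j} is the corresponding principal submatrix of S. -/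
/-!
No edge joins two components, so for the map `c` sending a vertex to its component every
`Λ ∈ ℝ^D_reg` and `Ω ∈ PD(B)` is block diagonal, hence so is `Σ = (I-Λ)^{-T} Ω (I-Λ)^{-1}`, whose
diagonal blocks are the matrices `(I-Λ_j)^{-T} Ω_j (I-Λ_j)^{-1}` of the induced subgraphs;
conversely, blocks `Λ_j`, `Ω_j` assemble into block-diagonal `Λ ∈ ℝ^D_reg`, `Ω ∈ PD(B)`. Thus
`Σ ↦ (Σ_{V_j,V_j})_j` maps `PD(G)` onto `∏_j PD(G_j)`. For block-diagonal `Σ`, `log det Σ` and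
`tr(Σ⁻¹ S)` split over the blocks, so `ℓ(Σ|S) = ∑_j ℓ(Σ_j | S_{V_j,V_j})`, and the supremum of a
sum of functions of independent variables is the sum of their suprema.
-/

open Matrix MeasureTheory Filter

noncomputable section

/-- Matrices `Λ` supported on the directed edge set `D` with `I - Λ` invertible. -/
def RDreg {ι : Type*} [Fintype ι] [DecidableEq ι] (D : Set (ι × ι)) :
    Set (Matrix ι ι ℝ) :=
  {Λ | (∀ i j, (i, j) ∉ D → Λ i j = 0) ∧ IsUnit (1 - Λ)}

/-- Positive definite matrices with off-diagonal support over the bidirected edges `B`. -/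
def PDB {ι : Type*} [Fintype ι] [DecidableEq ι] (B : SimpleGraph ι) :
    Set (Matrix ι ι ℝ) :=
  {Ω | Ω.PosDef ∧ ∀ i j, i ≠ j → ¬ B.Adj i j → Ω i j = 0}

/-- The covariance matrices of the linear structural equation model of the mixed graph
`G = (V, D, B)`:  `PD(G) = {(I-Λ)⁻ᵀ Ω (I-Λ)⁻¹}`. -/
def PDG {ι : Type*} [Fintype ι] [DecidableEq ι] (D : Set (ι × ι)) (B : SimpleGraph ι) :
    Set (Matrix ι ι ℝ) :=
  {S | ∃ Λ ∈ RDreg D, ∃ Ω ∈ PDB B, S = ((1 - Λ)⁻¹)ᵀ * Ω * (1 - Λ)⁻¹}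

/-- Gaussian log-likelihood `ℓ(Σ | S) = - log det Σ - trace (Σ⁻¹ S)`. -/
def loglik {ι : Type*} [Fintype ι] [DecidableEq ι] (Sig S : Matrix ι ι ℝ) : ℝ :=
  -Real.log Sig.det - (Sig⁻¹ * S).trace

/-- A set of nodes together with all parents of its elements. -/
def Pa {ι : Type*} (D : Set (ι × ι)) (C : Set ι) : Set ι :=
  C ∪ {k | ∃ i ∈ C, (k, i) ∈ D}

noncomputable local instance {p : ℕ} (s : Set (Fin p)) : Fintype s := Fintype.ofFinite s


namespace EReal

lemma coe_finset_sum {α : Type*} (s : Finset α) (f : α → ℝ) :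
    ((∑ i ∈ s, f i : ℝ) : EReal) = ∑ i ∈ s, (f i : EReal) :=
  map_sum (⟨⟨Real.toEReal, coe_zero⟩, coe_add⟩ : ℝ →+ EReal) f s

lemma iSup_pi_sum_eq_sum_iSup {κ : Type*} [Fintype κ] {X : κ → Type*} {s : ∀ j, Set (X j)}
    (hs : ∀ j, (s j).Nonempty) (f : ∀ j, X j → EReal) :
    ⨆ t ∈ Set.univ.pi s, ∑ j, f j (t j) = ∑ j, ⨆ x ∈ s j, f j x := by
  classical
  refine le_antisymm (iSup₂_le fun t ht => Finset.sum_le_sum fun j _ =>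
    le_iSup₂_of_le (t j) (ht j trivial) le_rfl) ?_
  suffices h : ∀ u : Finset κ,
      ∑ j ∈ u, ⨆ x ∈ s j, f j x ≤ ⨆ t ∈ Set.univ.pi s, ∑ j ∈ u, f j (t j) from h _
  intro u
  induction u using Finset.induction_on with
  | empty =>
    obtain ⟨t, ht⟩ := Set.univ_pi_nonempty_iff.2 hs
    simpa using le_iSup₂_of_le (f := fun t (_ : t ∈ Set.univ.pi s) => (0 : EReal)) t ht le_rfl
  | @insert a u ha ih =>
    rw [Finset.sum_insert ha]
    refine (add_le_add_right ih _).trans (add_le_of_forall_lt fun y hy z hz => ?_)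
    obtain ⟨x, hx, hyx⟩ := lt_biSup_iff.1 hy
    obtain ⟨t, ht, hzt⟩ := lt_biSup_iff.1 hz
    have hu : ∑ j ∈ u, f j (Function.update t a x j) = ∑ j ∈ u, f j (t j) :=
      Finset.sum_congr rfl fun j hj => by rw [Function.update_of_ne (ne_of_mem_of_not_mem hj ha)]
    refine le_iSup₂_of_le (Function.update t a x)
      ((Set.update_mem_pi_iff_of_mem ht).2 fun _ => hx) ?_
    rw [Finset.sum_insert ha, Function.update_self, hu]
    exact add_le_add hyx.le hzt.le

end EReal

lemma Fintype.sum_fiberwise_setOf {ι κ M : Type*} [AddCommMonoid M] [Fintype ι] [Fintype κ]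
    [DecidableEq κ] (c : ι → κ) [∀ j, Fintype {i | c i = j}] (f : ι → M) :
    ∑ j, ∑ i : {i | c i = j}, f i = ∑ i, f i := by
  rw [← Finset.sum_fiberwise Finset.univ c f]
  exact Finset.sum_congr rfl fun j _ => (Finset.sum_subtype _ (by simp) f).symm

namespace Matrix

variable {ι κ R : Type*}

def IsBlockDiagonal [Zero R] (c : ι → κ) (M : Matrix ι ι R) : Prop :=
  ∀ a b, c a ≠ c b → M a b = 0

def diagBlock (c : ι → κ) (j : κ) (M : Matrix ι ι R) :
    Matrix {i | c i = j} {i | c i = j} R :=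
  M.submatrix (↑) (↑)

def ofDiagBlocks [Zero R] [DecidableEq κ] (c : ι → κ)
    (T : ∀ j, Matrix {i | c i = j} {i | c i = j} R) : Matrix ι ι R :=
  of fun a b => if h : c b = c a then T (c a) ⟨a, rfl⟩ ⟨b, h⟩ else 0

def semCov [Fintype ι] [DecidableEq ι] [CommRing R] (Λ Ω : Matrix ι ι R) : Matrix ι ι R :=
  ((1 - Λ)⁻¹)ᵀ * Ω * (1 - Λ)⁻¹

variable {c : ι → κ}

lemma isBlockDiagonal_ofDiagBlocks [Zero R] [DecidableEq κ]
    (T : ∀ j, Matrix {i | c i = j} {i | c i = j} R) : IsBlockDiagonal c (ofDiagBlocks c T) :=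
  fun _ _ h => dif_neg (Ne.symm h)

@[simp]
lemma diagBlock_ofDiagBlocks [Zero R] [DecidableEq κ]
    (T : ∀ j, Matrix {i | c i = j} {i | c i = j} R) (j : κ) :
    diagBlock c j (ofDiagBlocks c T) = T j := by
  ext ⟨a, rfl⟩ ⟨b, hb⟩
  exact dif_pos (show c b = c a from hb)

@[simp]
lemma diagBlock_one [DecidableEq ι] [Zero R] [One R] (j : κ) :
    diagBlock c j (1 : Matrix ι ι R) = 1 :=
  submatrix_one_embedding ⟨_, Subtype.val_injective⟩

@[simp]
lemma diagBlock_sub [Sub R] (j : κ) (A B : Matrix ι ι R) :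
    diagBlock c j (A - B) = diagBlock c j A - diagBlock c j B := rfl

@[simp]
lemma diagBlock_transpose (j : κ) (A : Matrix ι ι R) :
    diagBlock c j Aᵀ = (diagBlock c j A)ᵀ := rfl

namespace IsBlockDiagonal

lemma one [DecidableEq ι] [Zero R] [One R] : IsBlockDiagonal c (1 : Matrix ι ι R) :=
  fun _ _ h => one_apply_ne fun e => h (congrArg c e)

lemma sub [AddGroup R] {A B : Matrix ι ι R} (hA : IsBlockDiagonal c A)
    (hB : IsBlockDiagonal c B) : IsBlockDiagonal c (A - B) := fun a b h => by
  rw [sub_apply, hA a b h, hB a b h, sub_zero]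

lemma transpose [Zero R] {A : Matrix ι ι R} (hA : IsBlockDiagonal c A) :
    IsBlockDiagonal c Aᵀ :=
  fun a b h => hA b a (Ne.symm h)

lemma mul [Fintype ι] [NonUnitalNonAssocSemiring R] {A B : Matrix ι ι R}
    (hA : IsBlockDiagonal c A) (hB : IsBlockDiagonal c B) : IsBlockDiagonal c (A * B) :=
  fun a b h => by
    rw [mul_apply]
    refine Finset.sum_eq_zero fun x _ => ?_
    by_cases hx : c a = c x
    · rw [hB x b (hx ▸ h), mul_zero]
    · rw [hA a x hx, zero_mul]

lemma ext_diagBlock [Zero R] {A B : Matrix ι ι R} (hA : IsBlockDiagonal c A)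
    (hB : IsBlockDiagonal c B) (h : ∀ j, diagBlock c j A = diagBlock c j B) : A = B := by
  ext a b
  by_cases hab : c b = c a
  · exact congrFun (congrFun (h (c a)) ⟨a, rfl⟩) ⟨b, hab⟩
  · rw [hA a b (Ne.symm hab), hB a b (Ne.symm hab)]

variable [Fintype ι] [Fintype κ] [DecidableEq κ] [∀ j, Fintype {i | c i = j}]

lemma diagBlock_mul [NonUnitalNonAssocSemiring R] {A : Matrix ι ι R}
    (hA : IsBlockDiagonal c A) (B : Matrix ι ι R) (j : κ) :
    diagBlock c j (A * B) = diagBlock c j A * diagBlock c j B := by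
  ext ⟨a, rfl⟩ b
  rw [diagBlock, submatrix_apply, mul_apply, ← Fintype.sum_fiberwise_setOf c,
    Finset.sum_eq_single (c a)]
  · rfl
  · intro j _ hj
    refine Finset.sum_eq_zero fun x _ => ?_
    rw [hA a x fun e => hj (x.2.symm.trans e.symm), zero_mul]
  · simp

lemma trace_mul_eq_sum [NonUnitalNonAssocSemiring R] {A : Matrix ι ι R}
    (hA : IsBlockDiagonal c A) (B : Matrix ι ι R) :
    (A * B).trace = ∑ j, (diagBlock c j A * diagBlock c j B).trace := by
  rw [trace, ← Fintype.sum_fiberwise_setOf c]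
  refine Finset.sum_congr rfl fun j _ => ?_
  rw [← hA.diagBlock_mul]
  rfl

lemma dotProduct_mulVec_eq_sum [CommSemiring R] {A : Matrix ι ι R} (hA : IsBlockDiagonal c A)
    (x : ι → R) :
    x ⬝ᵥ (A *ᵥ x) =
      ∑ j, (fun i : {i | c i = j} => x i) ⬝ᵥ (diagBlock c j A *ᵥ fun i => x i) := by
  -- `y ⬝ᵥ M y = tr (M (y yᵀ))`, and the blocks of `x xᵀ` are the `x_j x_jᵀ`
  have h : ∀ {n : Type _} [Fintype n] (M : Matrix n n R) (y : n → R),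
      y ⬝ᵥ (M *ᵥ y) = (M * vecMulVec y y).trace := by
    intro n _ M y
    rw [mul_vecMulVec, trace_vecMulVec, dotProduct_comm]
  rw [h A x, hA.trace_mul_eq_sum]
  refine Finset.sum_congr rfl fun j _ => ?_
  rw [h]
  rfl

variable [DecidableEq ι] [CommRing R]

lemma det_eq_prod {A : Matrix ι ι R} (hA : IsBlockDiagonal c A) :
    A.det = ∏ j, (diagBlock c j A).det := by
  let : LinearOrder κ := LinearOrder.lift' _ (Fintype.equivFin κ).injective
  rw [BlockTriangular.det_fintype fun a b h => hA a b h.ne']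
  refine Finset.prod_congr rfl fun j _ => ?_
  let e : {a // c a = j} ≃ {i | c i = j} := Equiv.subtypeEquivRight fun _ => Iff.rfl
  exact det_submatrix_equiv_self e (diagBlock c j A)

lemma isUnit_iff {A : Matrix ι ι R} (hA : IsBlockDiagonal c A) :
    IsUnit A ↔ ∀ j, IsUnit (diagBlock c j A) := by
  simp only [isUnit_iff_isUnit_det, hA.det_eq_prod, IsUnit.prod_univ_iff]

lemma inv_eq {A : Matrix ι ι R} (hA : IsBlockDiagonal c A) (h : IsUnit A) :
    A⁻¹ = ofDiagBlocks c fun j => (diagBlock c j A)⁻¹ := by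
  refine inv_eq_right_inv (ext_diagBlock (hA.mul (isBlockDiagonal_ofDiagBlocks _)) one fun j => ?_)
  rw [hA.diagBlock_mul, diagBlock_ofDiagBlocks, diagBlock_one,
    mul_nonsing_inv _ ((isUnit_iff_isUnit_det _).1 (hA.isUnit_iff.1 h j))]

lemma inv {A : Matrix ι ι R} (hA : IsBlockDiagonal c A) (h : IsUnit A) :
    IsBlockDiagonal c A⁻¹ :=
  hA.inv_eq h ▸ isBlockDiagonal_ofDiagBlocks _

lemma diagBlock_inv {A : Matrix ι ι R} (hA : IsBlockDiagonal c A) (h : IsUnit A) (j : κ) :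
    diagBlock c j A⁻¹ = (diagBlock c j A)⁻¹ := by
  rw [hA.inv_eq h, diagBlock_ofDiagBlocks]

lemma diagBlock_semCov {Λ Ω : Matrix ι ι R} (hΛ : IsBlockDiagonal c Λ)
    (hΩ : IsBlockDiagonal c Ω) (hunit : IsUnit (1 - Λ)) (j : κ) :
    diagBlock c j (semCov Λ Ω) = semCov (diagBlock c j Λ) (diagBlock c j Ω) := by
  have hinv := (one.sub hΛ).inv hunit
  rw [Matrix.semCov, (hinv.transpose.mul hΩ).diagBlock_mul, hinv.transpose.diagBlock_mul,
    diagBlock_transpose, (one.sub hΛ).diagBlock_inv hunit, diagBlock_sub, diagBlock_one,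
    Matrix.semCov]

lemma semCov {Λ Ω : Matrix ι ι R} (hΛ : IsBlockDiagonal c Λ) (hΩ : IsBlockDiagonal c Ω)
    (hunit : IsUnit (1 - Λ)) : IsBlockDiagonal c (semCov Λ Ω) :=
  have hinv := (one.sub hΛ).inv hunit
  (hinv.transpose.mul hΩ).mul hinv

end IsBlockDiagonal

variable [Fintype ι] [Fintype κ] [DecidableEq κ] [∀ j, Fintype {i | c i = j}]

lemma posDef_ofDiagBlocks {T : ∀ j, Matrix {i | c i = j} {i | c i = j} ℝ}
    (hT : ∀ j, (T j).PosDef) : (ofDiagBlocks c T).PosDef := by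
  have hblk := isBlockDiagonal_ofDiagBlocks (c := c) T
  refine PosDef.of_dotProduct_mulVec_pos ?_ fun x hx => ?_
  · refine hblk.transpose.ext_diagBlock hblk fun j => ?_
    rw [diagBlock_transpose, diagBlock_ofDiagBlocks, ← conjTranspose_eq_transpose_of_trivial]
    exact (hT j).1
  · obtain ⟨a, ha⟩ := Function.ne_iff.1 hx
    rw [star_trivial, hblk.dotProduct_mulVec_eq_sum]
    refine Finset.sum_pos' (fun j _ => ?_) ⟨c a, Finset.mem_univ _, ?_⟩
    · simpa using (hT j).posSemidef.dotProduct_mulVec_nonneg fun i => x i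
    · have hxa : (fun i : {i | c i = c a} => x i) ≠ 0 := Function.ne_iff.2 ⟨⟨a, rfl⟩, ha⟩
      simpa using (hT (c a)).dotProduct_mulVec_pos hxa

lemma loglik_eq_sum_diagBlock [DecidableEq ι] {Sig : Matrix ι ι ℝ} (hSig : Sig.PosDef)
    (hblk : IsBlockDiagonal c Sig) (S : Matrix ι ι ℝ) :
    loglik Sig S = ∑ j, loglik (diagBlock c j Sig) (diagBlock c j S) := by
  have hdet : ∀ j, (diagBlock c j Sig).det ≠ 0 := fun j =>
    (hSig.submatrix Subtype.val_injective).det_pos.ne'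
  simp only [loglik, hblk.det_eq_prod, Real.log_prod fun j _ => hdet j,
    (hblk.inv hSig.isUnit).trace_mul_eq_sum, hblk.diagBlock_inv hSig.isUnit,
    Finset.sum_sub_distrib, Finset.sum_neg_distrib]

end Matrix

def inducedEdges {ι : Type*} (D : Set (ι × ι)) (s : Set ι) : Set (s × s) :=
  {ab | ((ab.1 : ι), (ab.2 : ι)) ∈ D}

section MixedGraph

variable {ι : Type*} [Fintype ι] [DecidableEq ι] {D : Set (ι × ι)} {B : SimpleGraph ι}

lemma one_mem_PDG : (1 : Matrix ι ι ℝ) ∈ PDG D B :=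
  ⟨0, ⟨fun _ _ _ => rfl, by simp⟩, 1, ⟨PosDef.one, fun _ _ h _ => one_apply_ne h⟩, by simp⟩

lemma posDef_of_mem_PDG {Sig : Matrix ι ι ℝ} (hSig : Sig ∈ PDG D B) : Sig.PosDef := by
  obtain ⟨Λ, ⟨-, hunit⟩, Ω, ⟨hΩ, -⟩, rfl⟩ := hSig
  rw [← conjTranspose_eq_transpose_of_trivial]
  exact hΩ.conjTranspose_mul_mul_same
    (mulVec_injective_iff_isUnit.2 (isUnit_nonsing_inv_iff.2 hunit))

variable {κ : Type*} {c : ι → κ}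

lemma isBlockDiagonal_of_mem_RDreg (hD : ∀ a b, (a, b) ∈ D → c a = c b)
    {Λ : Matrix ι ι ℝ} (hΛ : Λ ∈ RDreg D) : IsBlockDiagonal c Λ :=
  fun a b h => hΛ.1 a b (mt (hD a b) h)

lemma isBlockDiagonal_of_mem_PDB (hB : ∀ a b, B.Adj a b → c a = c b)
    {Ω : Matrix ι ι ℝ} (hΩ : Ω ∈ PDB B) : IsBlockDiagonal c Ω :=
  fun a b h => hΩ.2 a b (ne_of_apply_ne c h) (mt (hB a b) h)

lemma diagBlock_mem_PDB [∀ j, Fintype {i | c i = j}] {Ω : Matrix ι ι ℝ} (hΩ : Ω ∈ PDB B)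
    (j : κ) : diagBlock c j Ω ∈ PDB (B.induce {i | c i = j}) :=
  ⟨hΩ.1.submatrix Subtype.val_injective,
    fun a b hab hadj => hΩ.2 a b (Subtype.coe_ne_coe.2 hab) hadj⟩

variable [Fintype κ] [DecidableEq κ] [∀ j, Fintype {i | c i = j}]

lemma diagBlock_mem_RDreg {Λ : Matrix ι ι ℝ} (hΛ : Λ ∈ RDreg D) (hblk : IsBlockDiagonal c Λ)
    (j : κ) : diagBlock c j Λ ∈ RDreg (inducedEdges D {i | c i = j}) := by
  refine ⟨fun a b hab => hΛ.1 a b hab, ?_⟩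
  rw [← diagBlock_one, ← diagBlock_sub]
  exact (IsBlockDiagonal.one.sub hblk).isUnit_iff.1 hΛ.2 j

lemma ofDiagBlocks_mem_RDreg {Λ : ∀ j, Matrix {i | c i = j} {i | c i = j} ℝ}
    (hΛ : ∀ j, Λ j ∈ RDreg (inducedEdges D {i | c i = j})) :
    ofDiagBlocks c Λ ∈ RDreg D := by
  refine ⟨fun a b hab => ?_, ?_⟩
  · by_cases h : c b = c a
    · exact (dif_pos h).trans ((hΛ (c a)).1 ⟨a, rfl⟩ ⟨b, h⟩ hab)
    · exact dif_neg h
  · refine (IsBlockDiagonal.one.sub (isBlockDiagonal_ofDiagBlocks Λ)).isUnit_iff.2 fun j => ?_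
    simpa using (hΛ j).2

lemma ofDiagBlocks_mem_PDB {Ω : ∀ j, Matrix {i | c i = j} {i | c i = j} ℝ}
    (hΩ : ∀ j, Ω j ∈ PDB (B.induce {i | c i = j})) : ofDiagBlocks c Ω ∈ PDB B := by
  refine ⟨posDef_ofDiagBlocks fun j => (hΩ j).1, fun a b hab hadj => ?_⟩
  by_cases h : c b = c a
  · exact (dif_pos h).trans
      ((hΩ (c a)).2 ⟨a, rfl⟩ ⟨b, h⟩ (fun e => hab (congrArg Subtype.val e)) hadj)
  · exact dif_neg h

lemma isBlockDiagonal_of_mem_PDG (hD : ∀ a b, (a, b) ∈ D → c a = c b)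
    (hB : ∀ a b, B.Adj a b → c a = c b) {Sig : Matrix ι ι ℝ} (hSig : Sig ∈ PDG D B) :
    IsBlockDiagonal c Sig := by
  obtain ⟨Λ, hΛ, Ω, hΩ, rfl⟩ := hSig
  exact (isBlockDiagonal_of_mem_RDreg hD hΛ).semCov (isBlockDiagonal_of_mem_PDB hB hΩ) hΛ.2

lemma image_diagBlock_PDG (hD : ∀ a b, (a, b) ∈ D → c a = c b)
    (hB : ∀ a b, B.Adj a b → c a = c b) :
    (fun Sig j => diagBlock c j Sig) '' PDG D B =
      Set.univ.pi fun j => PDG (inducedEdges D {i | c i = j}) (B.induce {i | c i = j}) := by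
  ext T
  constructor
  · rintro ⟨_, ⟨Λ, hΛ, Ω, hΩ, rfl⟩, rfl⟩ j -
    have hΛblk := isBlockDiagonal_of_mem_RDreg hD hΛ
    exact ⟨_, diagBlock_mem_RDreg hΛ hΛblk j, _, diagBlock_mem_PDB hΩ j,
      hΛblk.diagBlock_semCov (isBlockDiagonal_of_mem_PDB hB hΩ) hΛ.2 j⟩
  · intro hT
    choose Λ hΛ Ω hΩ hTeq using fun j => hT j trivial
    have hΛmem := ofDiagBlocks_mem_RDreg hΛ
    refine ⟨semCov (ofDiagBlocks c Λ) (ofDiagBlocks c Ω),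
      ⟨_, hΛmem, _, ofDiagBlocks_mem_PDB hΩ, rfl⟩, funext fun j => ?_⟩
    dsimp only
    rw [(isBlockDiagonal_ofDiagBlocks Λ).diagBlock_semCov (isBlockDiagonal_ofDiagBlocks Ω)
      hΛmem.2, diagBlock_ofDiagBlocks, diagBlock_ofDiagBlocks, hTeq, semCov]

end MixedGraph

theorem loglik_sup_decomposition_general (p k : ℕ) (D : Set (Fin p × Fin p))
    (B : SimpleGraph (Fin p))
    (V : Fin k → Set (Fin p))
    (hpart : ∀ i : Fin p, ∃! j, i ∈ V j)
    (hsep : ∀ j j', j ≠ j' → ∀ a ∈ V j, ∀ b ∈ V j', (a, b) ∉ D ∧ ¬ B.Adj a b)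
    (S : Matrix (Fin p) (Fin p) ℝ) :
    (∀ Sig ∈ PDG D B, ∀ j j', j ≠ j' → ∀ a ∈ V j, ∀ b ∈ V j', Sig a b = 0) ∧
    (⨆ Sig ∈ PDG D B, (loglik Sig S : EReal)) =
      ∑ j : Fin k,
        ⨆ Sigj ∈ PDG {ab : (V j) × (V j) | ((ab.1 : Fin p), (ab.2 : Fin p)) ∈ D}
            (B.induce (V j)),
          (loglik Sigj (S.submatrix (Subtype.val) (Subtype.val)) : EReal) := by
  choose c hc using hpart
  obtain rfl : V = fun j => {i | c i = j} :=
    funext fun j => Set.ext fun i => ⟨fun h => ((hc i).2 j h).symm, fun h => h ▸ (hc i).1⟩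
  have hD : ∀ a b, (a, b) ∈ D → c a = c b := fun a b hab =>
    by_contra fun h => (hsep _ _ h a rfl b rfl).1 hab
  have hB : ∀ a b, B.Adj a b → c a = c b := fun a b hab =>
    by_contra fun h => (hsep _ _ h a rfl b rfl).2 hab
  refine ⟨fun Sig hSig j j' hjj' a ha b hb =>
    isBlockDiagonal_of_mem_PDG hD hB hSig a b (ha ▸ hb ▸ hjj'), ?_⟩
  calc (⨆ Sig ∈ PDG D B, (loglik Sig S : EReal))
      = ⨆ Sig ∈ PDG D B, ∑ j, (loglik (diagBlock c j Sig) (diagBlock c j S) : EReal) :=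
        iSup_congr fun Sig => iSup_congr fun hSig => by
          rw [loglik_eq_sum_diagBlock (posDef_of_mem_PDG hSig)
            (isBlockDiagonal_of_mem_PDG hD hB hSig), EReal.coe_finset_sum]
    _ = ⨆ T ∈ (fun Sig j => diagBlock c j Sig) '' PDG D B,
          ∑ j, (loglik (T j) (diagBlock c j S) : EReal) := by rw [iSup_image]
    _ = _ := by
      rw [image_diagBlock_PDG hD hB]
      exact EReal.iSup_pi_sum_eq_sum_iSup (fun j => ⟨1, one_mem_PDG⟩)
        fun j T => (loglik T (diagBlock c j S) : EReal)

/-- If the connected components (with respect to edges of both types) of the mixed graph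
`G = (V, D, B)` have vertex sets `V_1, ..., V_k`, then every `Σ ∈ PD(G)` vanishes in the
entries joining two different components, and the supremum of the log-likelihood over
`PD(G)` is the sum over `j` of the suprema of the log-likelihoods of the induced
subgraphs `G_j` evaluated at the principal submatrices `S_{V_j, V_j}`. -/
theorem loglik_sup_decomposition (p k : ℕ) (D : Set (Fin p × Fin p))
    (hD : ∀ i, (i, i) ∉ D) (B : SimpleGraph (Fin p))
    (V : Fin k → Set (Fin p))
    (hpart : ∀ i : Fin p, ∃! j, i ∈ V j)
    (hne : ∀ j, (V j).Nonempty)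
    (hsep : ∀ j j', j ≠ j' → ∀ a ∈ V j, ∀ b ∈ V j', (a, b) ∉ D ∧ ¬ B.Adj a b)
    (hconn : ∀ j, ∀ a ∈ V j, ∀ b ∈ V j,
      Relation.ReflTransGen (fun x y => (x, y) ∈ D ∨ (y, x) ∈ D ∨ B.Adj x y) a b)
    (S : Matrix (Fin p) (Fin p) ℝ) (hS : S.PosSemidef) :
    (∀ Sig ∈ PDG D B, ∀ j j', j ≠ j' → ∀ a ∈ V j, ∀ b ∈ V j', Sig a b = 0) ∧
    (⨆ Sig ∈ PDG D B, (loglik Sig S : EReal)) =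
      ∑ j : Fin k,
        ⨆ Sigj ∈ PDG {ab : (V j) × (V j) | ((ab.1 : Fin p), (ab.2 : Fin p)) ∈ D}
            (B.induce (V j)),
          (loglik Sigj (S.submatrix (Subtype.val) (Subtype.val)) : EReal) :=
  loglik_sup_decomposition_general p k D B V hpart hsep S
end
end

section
/- Let G be a connected simple graph on the vertex set V={1,...,p} with edge set B, and let q ∈ ℝ^p be a vector with all coordinates nonzero. Then there exists a positive definite p×p matrix Σ with Σ_{ij}=0 for all i≠j with {i,j}∉B, such that the vector Σq has precisely one nonzero entry. -/
/-!
With `L` the Laplacian of `B`, `D = diag q` and any vertex `k`, take `Σ = D⁻¹ (L + eₖeₖᵀ) D⁻¹`.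
Since `L 𝟙 = 0`, `Σ q = D⁻¹ eₖ`, which is nonzero exactly at `k`. The quadratic form of
`L + eₖeₖᵀ` is `½ ∑_{i ~ j} (xᵢ - xⱼ)² + xₖ²`; on a connected graph it vanishes only when `x` is
constant with `xₖ = 0`, so `L + eₖeₖᵀ` is positive definite, and the congruence by the invertible
diagonal `D⁻¹` keeps both positive definiteness and the sparsity pattern of `L`.
-/

open Matrix MeasureTheory Filter

noncomputable section

namespace SimpleGraph

variable {V : Type*} [Fintype V] [DecidableEq V] (G : SimpleGraph V) [DecidableRel G.Adj]

def groundedLapMatrix (k : V) : Matrix V V ℝ :=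
  G.lapMatrix ℝ + single k k 1

theorem groundedLapMatrix_mulVec (k : V) (x : V → ℝ) :
    G.groundedLapMatrix k *ᵥ x = G.lapMatrix ℝ *ᵥ x + Pi.single k (x k) := by
  rw [groundedLapMatrix, add_mulVec, single_mulVec, one_mul]
  rfl

theorem groundedLapMatrix_apply_of_ne_of_not_adj {k i j : V} (hij : i ≠ j) (h : ¬G.Adj i j) :
    G.groundedLapMatrix k i j = 0 := by
  have hk : ¬(k = i ∧ k = j) := fun hk ↦ hij (hk.1.symm.trans hk.2)
  simp [groundedLapMatrix, lapMatrix, degMatrix, hij, h, single_apply_of_ne _ _ _ _ _ hk]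

theorem groundedLapMatrix_mulVec_one (k : V) :
    G.groundedLapMatrix k *ᵥ (fun _ ↦ 1) = Pi.single k 1 := by
  rw [groundedLapMatrix_mulVec, lapMatrix_mulVec_const_eq_zero, zero_add]

theorem isHermitian_groundedLapMatrix (k : V) : (G.groundedLapMatrix k).IsHermitian :=
  (G.isHermitian_lapMatrix ℝ).add (by simp [IsHermitian])

theorem posDef_groundedLapMatrix (hG : G.Connected) (k : V) : (G.groundedLapMatrix k).PosDef := by
  refine .of_dotProduct_mulVec_pos (G.isHermitian_groundedLapMatrix k) fun x hx ↦ ?_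
  have hform : star x ⬝ᵥ (G.groundedLapMatrix k *ᵥ x)
      = toLinearMap₂' ℝ (G.lapMatrix ℝ) x x + x k ^ 2 := by
    rw [groundedLapMatrix_mulVec, dotProduct_add, dotProduct_single, toLinearMap₂'_apply', sq]
    rfl
  have hlap : 0 ≤ toLinearMap₂' ℝ (G.lapMatrix ℝ) x x := by
    rw [lapMatrix_toLinearMap₂']
    positivity
  rw [hform]
  by_contra! hle
  have hk : x k = 0 := by nlinarith [sq_nonneg (x k)]
  have hconst := (G.lapMatrix_toLinearMap₂'_apply'_eq_zero_iff_forall_reachable x).mp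
    (by nlinarith [sq_nonneg (x k)])
  exact hx (funext fun i ↦ (hconst i k (hG.preconnected i k)).trans hk)

end SimpleGraph

theorem diagonal_mul_mul_diagonal_mem_PDB {ι : Type*} [Fintype ι] [DecidableEq ι]
    {B : SimpleGraph ι} {M : Matrix ι ι ℝ} (hM : M ∈ PDB B) {d : ι → ℝ} (hd : ∀ i, d i ≠ 0) :
    diagonal d * M * diagonal d ∈ PDB B := by
  have hunit : IsUnit (diagonal d) := isUnit_diagonal.mpr (Pi.isUnit_iff.mpr fun i ↦ (hd i).isUnit)
  refine ⟨?_, fun i j hij hadj ↦ ?_⟩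
  · simpa [star_eq_conjTranspose] using (IsUnit.posDef_star_left_conjugate_iff hunit).mpr hM.1
  · simp [mul_diagonal, diagonal_mul, hM.2 i j hij hadj]

/-- For a connected simple graph `B` on `p` vertices and a vector `q` with all
coordinates nonzero, there is a positive definite matrix `Σ ∈ PD(B)` such that `Σq` has
precisely one nonzero entry. -/
theorem exists_pdb_matrix_single_nonzero (p : ℕ) (B : SimpleGraph (Fin p))
    (hB : B.Connected) (q : Fin p → ℝ) (hq : ∀ i, q i ≠ 0) :
    ∃ Sig ∈ PDB B, ∃! kk : Fin p, Sig.mulVec q kk ≠ 0 := by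
  classical
  obtain ⟨k⟩ := hB.nonempty
  have hL : B.groundedLapMatrix k ∈ PDB B :=
    ⟨B.posDef_groundedLapMatrix hB k, fun _ _ ↦ B.groundedLapMatrix_apply_of_ne_of_not_adj⟩
  have hq_one : diagonal q⁻¹ *ᵥ q = fun _ ↦ 1 := funext fun i ↦ by
    rw [mulVec_diagonal, Pi.inv_apply, inv_mul_cancel₀ (hq i)]
  have hmulVec : (diagonal q⁻¹ * B.groundedLapMatrix k * diagonal q⁻¹) *ᵥ q
      = Pi.single k (q k)⁻¹ := by
    rw [← mulVec_mulVec, hq_one, ← mulVec_mulVec, B.groundedLapMatrix_mulVec_one,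
      diagonal_mulVec_single, mul_one, Pi.inv_apply]
  refine ⟨_, diagonal_mul_mul_diagonal_mem_PDB hL (d := q⁻¹) fun i ↦ inv_ne_zero (hq i), ?_⟩
  rw [hmulVec]
  exact ⟨k, by simpa using hq k, fun i hi ↦ by_contra fun hik ↦ hi (Pi.single_eq_of_ne hik _)⟩

end
end

section
/- Let G be a connected simple graph on V={1,...,p} with edge set B, let S be a positive semidefinite p×p real matrix, and suppose there exists a vector q ∈ ℝ^p with all coordinates nonzero such that Sq = 0. Then the log-likelihood is unbounded above on PD(B): sup_{Σ ∈ PD(B)} ( −log det Σ − trace(Σ^{-1} S) ) = ∞. -/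
open Matrix MeasureTheory Filter

noncomputable section

/-!
Let `L` be the Laplacian of `B`, `D = diag(q)⁻¹` and `e` a standard basis vector. The matrix
`M = D L D` is supported on `B`, positive semidefinite, and (as `B` is connected) its null vectors
are the multiples of `q`, so `Σ(t) = M + t e eᵀ ∈ PD(B)` for all `t > 0`. As `M q = 0`, `Σ(t)` is
`Σ(1)` times a rank-one perturbation of the identity which acts trivially on the right of `S`.
Hence `det Σ(t) = t det Σ(1)` while `tr(Σ(t)⁻¹ S)` is independent of `t`, and
`ℓ(Σ(t) | S) = ℓ(Σ(1) | S) - log t → ∞` as `t → 0`.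
-/

namespace Matrix

section PosDef

variable {n R : Type*} [Fintype n] [Ring R] [PartialOrder R] [StarRing R]
  [IsOrderedAddMonoid R]

theorem PosSemidef.posDef_add {A B : Matrix n n R} (hA : A.PosSemidef) (hB : B.PosSemidef)
    (h : ∀ x, star x ⬝ᵥ (A *ᵥ x) = 0 → star x ⬝ᵥ (B *ᵥ x) = 0 → x = 0) : (A + B).PosDef := by
  refine PosDef.of_dotProduct_mulVec_pos (hA.isHermitian.add hB.isHermitian) fun x hx => ?_
  have hAx := hA.dotProduct_mulVec_nonneg x
  have hBx := hB.dotProduct_mulVec_nonneg x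
  rw [add_mulVec, dotProduct_add]
  refine (add_nonneg hAx hBx).lt_of_ne fun h0 => hx ?_
  obtain ⟨hA0, hB0⟩ := (add_eq_zero_iff_of_nonneg hAx hBx).mp h0.symm
  exact h x hA0 hB0

end PosDef

variable {n K : Type*} [Fintype n] [DecidableEq n] [CommRing K]

theorem det_one_add_vecMulVec (x v : n → K) : (1 + vecMulVec x v).det = 1 + v ⬝ᵥ x := by
  rw [vecMulVec_eq Unit, det_one_add_replicateCol_mul_replicateRow]

theorem trace_inv_mul_mul_eq {A P S : Matrix n n K} (hP : IsUnit P.det) (hSP : S * P = S) :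
    ((A * P)⁻¹ * S).trace = (A⁻¹ * S).trace := by
  have hSP' : S * P⁻¹ = S := by
    rw [← hSP, Matrix.mul_assoc, mul_nonsing_inv _ hP, Matrix.mul_one, hSP]
  rw [mul_inv_rev, Matrix.mul_assoc, trace_mul_comm, Matrix.mul_assoc, hSP']

variable {M : Matrix n n K} {u v x : n → K}

theorem add_smul_vecMulVec_eq_mul (hMx : M *ᵥ x = 0) (hvx : v ⬝ᵥ x = 1) (t : K) :
    M + t • vecMulVec u v = (M + vecMulVec u v) * (1 + (t - 1) • vecMulVec x v) := by
  have hAx : (M + vecMulVec u v) *ᵥ x = u := by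
    rw [add_mulVec, hMx, zero_add, vecMulVec_mulVec, hvx, MulOpposite.op_one, one_smul]
  rw [Matrix.mul_add, Matrix.mul_one, Matrix.mul_smul, mul_vecMulVec, hAx]
  module

theorem det_add_smul_vecMulVec (hMx : M *ᵥ x = 0) (hvx : v ⬝ᵥ x = 1) (t : K) :
    (M + t • vecMulVec u v).det = t * (M + vecMulVec u v).det := by
  rw [add_smul_vecMulVec_eq_mul hMx hvx, det_mul, ← vecMulVec_smul, det_one_add_vecMulVec,
    smul_dotProduct, hvx, smul_eq_mul, mul_one, add_sub_cancel, mul_comm]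

theorem trace_inv_add_smul_vecMulVec_mul {S : Matrix n n K} (hMx : M *ᵥ x = 0)
    (hvx : v ⬝ᵥ x = 1) (hSx : S *ᵥ x = 0) {t : K} (ht : IsUnit t) :
    ((M + t • vecMulVec u v)⁻¹ * S).trace = ((M + vecMulVec u v)⁻¹ * S).trace := by
  rw [add_smul_vecMulVec_eq_mul hMx hvx]
  refine trace_inv_mul_mul_eq ?_ ?_
  · rw [← vecMulVec_smul, det_one_add_vecMulVec, smul_dotProduct, hvx, smul_eq_mul, mul_one,
      add_sub_cancel]
    exact ht
  · rw [Matrix.mul_add, Matrix.mul_one, Matrix.mul_smul, mul_vecMulVec, hSx, zero_vecMulVec,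
      smul_zero, add_zero]

end Matrix

namespace SimpleGraph

variable {V : Type*} [Fintype V] [DecidableEq V] (G : SimpleGraph V) [DecidableRel G.Adj]

def scaledLapMatrix (q : V → ℝ) : Matrix V V ℝ :=
  diagonal q⁻¹ * G.lapMatrix ℝ * diagonal q⁻¹

variable {G} {q : V → ℝ}

theorem scaledLapMatrix_apply_eq_zero {i j : V} (hij : i ≠ j) (hadj : ¬ G.Adj i j) :
    G.scaledLapMatrix q i j = 0 := by
  simp [scaledLapMatrix, diagonal_mul, mul_diagonal, lapMatrix, degMatrix, hij, hadj]

theorem scaledLapMatrix_mulVec_self (hq : ∀ i, q i ≠ 0) : G.scaledLapMatrix q *ᵥ q = 0 := by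
  have h1 : diagonal q⁻¹ *ᵥ q = fun _ => 1 := by
    ext i
    simp [mulVec_diagonal, inv_mul_cancel₀ (hq i)]
  rw [scaledLapMatrix, ← mulVec_mulVec, ← mulVec_mulVec, h1, lapMatrix_mulVec_const_eq_zero,
    mulVec_zero]

theorem posSemidef_scaledLapMatrix : (G.scaledLapMatrix q).PosSemidef := by
  simpa [scaledLapMatrix, diagonal_conjTranspose] using
    (G.posSemidef_lapMatrix ℝ).mul_mul_conjTranspose_same (diagonal q⁻¹)

theorem exists_eq_smul_of_dotProduct_scaledLapMatrix_mulVec_eq_zero (hG : G.Connected)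
    (hq : ∀ i, q i ≠ 0) {x : V → ℝ} (hx : x ⬝ᵥ (G.scaledLapMatrix q *ᵥ x) = 0) :
    ∃ c : ℝ, x = c • q := by
  obtain ⟨i₀⟩ := hG.nonempty
  have hdiag : ∀ w, x ⬝ᵥ (diagonal q⁻¹ *ᵥ w) = (diagonal q⁻¹ *ᵥ x) ⬝ᵥ w := fun w => by
    rw [dotProduct_mulVec, ← mulVec_transpose, diagonal_transpose]
  have hconst : ∀ i j, G.Reachable i j → (diagonal q⁻¹ *ᵥ x) i = (diagonal q⁻¹ *ᵥ x) j := by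
    rw [← lapMatrix_toLinearMap₂'_apply'_eq_zero_iff_forall_reachable, toLinearMap₂'_apply', ← hx,
      scaledLapMatrix, ← mulVec_mulVec, ← mulVec_mulVec, hdiag]
  refine ⟨x i₀ / q i₀, funext fun i => ?_⟩
  have h := hconst i i₀ (hG.preconnected i i₀)
  simp only [mulVec_diagonal, Pi.inv_apply] at h
  rw [Pi.smul_apply, smul_eq_mul, div_mul_eq_mul_div, eq_div_iff (hq i₀)]
  field_simp [hq i, hq i₀] at h
  rw [h, mul_comm]

theorem posDef_scaledLapMatrix_add_smul_vecMulVec_single (hG : G.Connected) (hq : ∀ i, q i ≠ 0)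
    (i : V) {t : ℝ} (ht : 0 < t) :
    (G.scaledLapMatrix q + t • vecMulVec (Pi.single i 1) (Pi.single i 1)).PosDef := by
  have hE : (vecMulVec (Pi.single i (1 : ℝ)) (Pi.single i 1)).PosSemidef := by
    simpa using posSemidef_vecMulVec_self_star (Pi.single i (1 : ℝ))
  refine posSemidef_scaledLapMatrix.posDef_add (hE.smul ht.le) fun x hLx hEx => ?_
  obtain ⟨c, rfl⟩ := exists_eq_smul_of_dotProduct_scaledLapMatrix_mulVec_eq_zero hG hq
    (by simpa using hLx)
  have hc : c = 0 := by simpa [smul_mulVec, vecMulVec_mulVec, ht.ne', hq i] using hEx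
  rw [hc, zero_smul]

theorem scaledLapMatrix_add_smul_vecMulVec_single_mem_PDB (hG : G.Connected) (hq : ∀ i, q i ≠ 0)
    (i : V) {t : ℝ} (ht : 0 < t) :
    G.scaledLapMatrix q + t • vecMulVec (Pi.single i 1) (Pi.single i 1) ∈ PDB G := by
  refine ⟨posDef_scaledLapMatrix_add_smul_vecMulVec_single hG hq i ht, fun j k hjk hadj => ?_⟩
  rw [Matrix.add_apply, scaledLapMatrix_apply_eq_zero hjk hadj, Matrix.smul_apply, vecMulVec_apply]
  rcases eq_or_ne j i with rfl | hj
  · simp [Pi.single_eq_of_ne hjk.symm]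
  · simp [Pi.single_eq_of_ne hj]

end SimpleGraph

theorem loglik_add_smul_vecMulVec {n : Type*} [Fintype n] [DecidableEq n] {M S : Matrix n n ℝ}
    {u v x : n → ℝ} (hMx : M *ᵥ x = 0) (hvx : v ⬝ᵥ x = 1) (hSx : S *ᵥ x = 0)
    (hdet : (M + vecMulVec u v).det ≠ 0) {t : ℝ} (ht : 0 < t) :
    loglik (M + t • vecMulVec u v) S = loglik (M + vecMulVec u v) S - Real.log t := by
  rw [loglik, loglik, det_add_smul_vecMulVec hMx hvx,
    trace_inv_add_smul_vecMulVec_mul hMx hvx hSx ht.ne'.isUnit, Real.log_mul ht.ne' hdet]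
  ring

theorem EReal.biSup_coe_eq_top_of_forall_exists_lt {α : Type*} {s : Set α} {f : α → ℝ}
    (h : ∀ y : ℝ, ∃ a ∈ s, y < f a) : ⨆ a ∈ s, (f a : EReal) = ⊤ := by
  refine iSup₂_eq_top _ |>.mpr fun b hb => ?_
  obtain ⟨y, hby, -⟩ := EReal.exists_between_coe_real hb
  obtain ⟨a, ha, hya⟩ := h y
  exact ⟨a, ha, hby.trans (EReal.coe_lt_coe_iff.mpr hya)⟩

theorem pdb_loglik_unbounded_of_kernel_vector_general (p : ℕ) (B : SimpleGraph (Fin p))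
    (hB : B.Connected) (S : Matrix (Fin p) (Fin p) ℝ)
    (q : Fin p → ℝ) (hq : ∀ i, q i ≠ 0) (hSq : S.mulVec q = 0) :
    (⨆ Sig ∈ PDB B, (loglik Sig S : EReal)) = ⊤ := by
  classical
  obtain ⟨i⟩ := hB.nonempty
  set e : Fin p → ℝ := Pi.single i 1
  set x : Fin p → ℝ := (q i)⁻¹ • q
  have hMx : B.scaledLapMatrix q *ᵥ x = 0 := by
    rw [mulVec_smul, SimpleGraph.scaledLapMatrix_mulVec_self hq, smul_zero]
  have hex : e ⬝ᵥ x = 1 := by simp [e, x, hq i]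
  have hSx : S *ᵥ x = 0 := by rw [mulVec_smul, hSq, smul_zero]
  have hdet : (B.scaledLapMatrix q + vecMulVec e e).det ≠ 0 := by
    simpa using (SimpleGraph.posDef_scaledLapMatrix_add_smul_vecMulVec_single hB hq i
      one_pos).det_pos.ne'
  refine EReal.biSup_coe_eq_top_of_forall_exists_lt fun y => ?_
  have ht := Real.exp_pos (loglik (B.scaledLapMatrix q + vecMulVec e e) S - y - 1)
  refine ⟨_, SimpleGraph.scaledLapMatrix_add_smul_vecMulVec_single_mem_PDB hB hq i ht, ?_⟩
  rw [loglik_add_smul_vecMulVec hMx hex hSx hdet ht, Real.log_exp]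
  linarith

/-- If `B` is a connected simple graph on `p` vertices, `S` is positive semidefinite and
some vector `q` with all coordinates nonzero satisfies `Sq = 0`, then the log-likelihood
is unbounded above on `PD(B)`. -/
theorem pdb_loglik_unbounded_of_kernel_vector (p : ℕ) (B : SimpleGraph (Fin p))
    (hB : B.Connected) (S : Matrix (Fin p) (Fin p) ℝ) (hS : S.PosSemidef)
    (q : Fin p → ℝ) (hq : ∀ i, q i ≠ 0) (hSq : S.mulVec q = 0) :
    (⨆ Sig ∈ PDB B, (loglik Sig S : EReal)) = ⊤ :=
  pdb_loglik_unbounded_of_kernel_vector_general p B hB S q hq hSq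

end
end

section
/- Let Σ be a positive definite p×p real matrix, let S be positive semidefinite, and let q ∈ ℝ^p be a nonzero vector with Sq = 0. For t > 0 define Σ_t = Σ − (1/t + qᵀΣq)^{-1} Σ q qᵀ Σ. Then ℓ(Σ_t|S) = ℓ(Σ|S) + log(1 + t qᵀΣq) for all t > 0, and consequently ℓ(Σ_t|S) → ∞ as t → ∞. -/
/-! By the Sherman–Morrison formula, `Σ_t` is invertible with `Σ_t⁻¹ = Σ⁻¹ + t q qᵀ`. Since
`Sq = 0`, adding `t q qᵀ` to `Σ⁻¹` leaves `trace (Σ_t⁻¹ S)` unchanged, while by the matrix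
determinant lemma it multiplies the determinant by `1 + t qᵀΣq`. As `qᵀΣq > 0`, the logarithm of
this factor tends to `∞`. -/

open Matrix MeasureTheory Filter

noncomputable section

namespace Matrix

variable {n K : Type*} [Fintype n] [Field K]

theorem vecMulVec_mul_mul_vecMulVec (a b u v : n → K) (M : Matrix n n K) :
    vecMulVec a b * M * vecMulVec u v = (b ⬝ᵥ M *ᵥ u) • vecMulVec a v := by
  rw [vecMulVec_mul, vecMulVec_mul_vecMulVec, vecMulVec_smul, dotProduct_mulVec]

theorem trace_vecMulVec_mul (u v : n → K) (M : Matrix n n K) :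
    (vecMulVec u v * M).trace = v ⬝ᵥ M *ᵥ u := by
  rw [vecMulVec_mul, trace_vecMulVec, dotProduct_comm, dotProduct_mulVec]

variable [DecidableEq n]

theorem inv_sub_smul_mul_vecMulVec_mul {A : Matrix n n K} (hA : IsUnit A.det) (u v : n → K)
    {t : K} (ht : t ≠ 0) (hden : 1 + t * (v ⬝ᵥ A *ᵥ u) ≠ 0) :
    (A - (1 / t + v ⬝ᵥ A *ᵥ u)⁻¹ • (A * vecMulVec u v * A))⁻¹ = A⁻¹ + t • vecMulVec u v := by
  set c := v ⬝ᵥ A *ᵥ u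
  set α := (1 / t + c)⁻¹
  have hα : α * (1 + t * c) = t := by
    simp only [α]
    field_simp
  have hquad : A * vecMulVec u v * A * vecMulVec u v = c • (A * vecMulVec u v) := by
    rw [Matrix.mul_assoc A, Matrix.mul_assoc A, vecMulVec_mul_mul_vecMulVec, mul_smul_comm]
  apply inv_eq_right_inv
  calc (A - α • (A * vecMulVec u v * A)) * (A⁻¹ + t • vecMulVec u v)
      = 1 + (t - α * (1 + t * c)) • (A * vecMulVec u v) := by
        rw [sub_mul, mul_add, mul_add, mul_nonsing_inv A hA, smul_mul_assoc, smul_mul_assoc,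
          mul_smul_comm, mul_smul_comm, mul_nonsing_inv_cancel_right A _ hA, hquad]
        module
    _ = 1 := by rw [hα, sub_self, zero_smul, add_zero]

theorem det_add_vecMulVec {A : Matrix n n K} (hA : IsUnit A.det) (u v : n → K) :
    (A + vecMulVec u v).det = A.det * (1 + v ⬝ᵥ A⁻¹ *ᵥ u) := by
  have hfactor : A + vecMulVec u v = A * (1 + vecMulVec (A⁻¹ *ᵥ u) v) := by
    rw [Matrix.mul_add, Matrix.mul_one, mul_vecMulVec, mulVec_mulVec, mul_nonsing_inv A hA,
      one_mulVec]
  rw [hfactor, det_mul, vecMulVec_eq Unit, det_one_add_replicateCol_mul_replicateRow]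

end Matrix

theorem loglik_eq_log_det_inv_sub_trace {ι : Type*} [Fintype ι] [DecidableEq ι]
    (Sig S : Matrix ι ι ℝ) : loglik Sig S = Real.log Sig⁻¹.det - (Sig⁻¹ * S).trace := by
  rw [loglik, det_nonsing_inv, Ring.inverse_eq_inv', Real.log_inv]

theorem loglik_rank_one_update_general (p : ℕ) (Sig S : Matrix (Fin p) (Fin p) ℝ)
    (hSig : Sig.PosDef) (q : Fin p → ℝ) (hq : q ≠ 0)
    (hSq : S.mulVec q = 0) :
    (∀ t : ℝ, 0 < t →
      loglik (Sig - (1 / t + q ⬝ᵥ Sig.mulVec q)⁻¹ • (Sig * vecMulVec q q * Sig)) S =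
        loglik Sig S + Real.log (1 + t * (q ⬝ᵥ Sig.mulVec q))) ∧
    Tendsto (fun t : ℝ =>
        loglik (Sig - (1 / t + q ⬝ᵥ Sig.mulVec q)⁻¹ • (Sig * vecMulVec q q * Sig)) S)
      atTop atTop := by
  set c := q ⬝ᵥ Sig *ᵥ q
  have hc : 0 < c := hSig.dotProduct_mulVec_pos hq
  have hdet : IsUnit Sig.det := hSig.isUnit.map detMonoidHom
  have hupdate : ∀ t : ℝ, 0 < t →
      loglik (Sig - (1 / t + c)⁻¹ • (Sig * vecMulVec q q * Sig)) S =
        loglik Sig S + Real.log (1 + t * c) := by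
    intro t ht
    have hden : 0 < 1 + t * c := by positivity
    have hdetInv : IsUnit Sig⁻¹.det := isUnit_nonsing_inv_det Sig hdet
    have htrace : ((Sig⁻¹ + t • vecMulVec q q) * S).trace = (Sig⁻¹ * S).trace := by
      rw [add_mul, trace_add, smul_mul_assoc, trace_smul, trace_vecMulVec_mul, hSq,
        dotProduct_zero, smul_zero, add_zero]
    have hdetUpdate : (Sig⁻¹ + t • vecMulVec q q).det = Sig⁻¹.det * (1 + t * c) := by
      rw [← smul_vecMulVec, det_add_vecMulVec hdetInv, nonsing_inv_nonsing_inv Sig hdet,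
        mulVec_smul, dotProduct_smul, smul_eq_mul]
    rw [loglik_eq_log_det_inv_sub_trace, inv_sub_smul_mul_vecMulVec_mul hdet q q ht.ne' hden.ne',
      htrace, hdetUpdate, Real.log_mul hdetInv.ne_zero hden.ne', loglik_eq_log_det_inv_sub_trace]
    ring
  refine ⟨hupdate, ?_⟩
  have hlog : Tendsto (fun t : ℝ => Real.log (1 + t * c)) atTop atTop :=
    Real.tendsto_log_atTop.comp
      (tendsto_atTop_add_const_left _ 1 (tendsto_id.atTop_mul_const hc))
  exact (tendsto_atTop_add_const_left _ _ hlog).congr'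
    ((eventually_gt_atTop 0).mono fun t ht => (hupdate t ht).symm)

/-- For positive definite `Σ`, positive semidefinite `S` and a nonzero vector `q` with
`Sq = 0`, the matrices `Σ_t = Σ − (1/t + qᵀΣq)⁻¹ Σ q qᵀ Σ` satisfy
`ℓ(Σ_t | S) = ℓ(Σ | S) + log(1 + t qᵀΣq)`, which tends to `∞` as `t → ∞`. -/
theorem loglik_rank_one_update (p : ℕ) (Sig S : Matrix (Fin p) (Fin p) ℝ)
    (hSig : Sig.PosDef) (hS : S.PosSemidef) (q : Fin p → ℝ) (hq : q ≠ 0)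
    (hSq : S.mulVec q = 0) :
    (∀ t : ℝ, 0 < t →
      loglik (Sig - (1 / t + q ⬝ᵥ Sig.mulVec q)⁻¹ • (Sig * vecMulVec q q * Sig)) S =
        loglik Sig S + Real.log (1 + t * (q ⬝ᵥ Sig.mulVec q))) ∧
    Tendsto (fun t : ℝ =>
        loglik (Sig - (1 / t + q ⬝ᵥ Sig.mulVec q)⁻¹ • (Sig * vecMulVec q q * Sig)) S)
      atTop atTop :=
  loglik_rank_one_update_general p Sig S hSig q hq hSq

end
end

section
/- Let G=(V,D,B) be a mixed graph on V={1,...,p} and let C_1,...,C_l be the vertex sets of the connected components of its bidirected part G_↔=(V,∅,B). Let X ∈ ℝ^{n×p} be a data matrix such that for every j=1,...,l the columns of X indexed by Pa(C_j) are linearly independent. Then the log-likelihood is bounded above on PD(G): sup_{Σ ∈ PD(G)} ℓ(Σ | (1/n)XᵀX) < ∞. -/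
open Matrix MeasureTheory Filter

noncomputable section

/-!
Write `A = I - Λ`, so that `Σ⁻¹ = A Ω⁻¹ Aᵀ` and `ℓ(Σ | S) = log det Σ⁻¹ - tr (Σ⁻¹ S)`. Since `Ω`,
hence `Ω⁻¹`, is block diagonal along the components `C` of the bidirected part, the trace
`tr (Σ⁻¹ (S - κ I)) = tr (Ω⁻¹ Aᵀ (S - κ I) A)` splits into blocks, and on each block
`Aᵀ (S - κ I) A` is positive semidefinite: for `y` supported on `C`, `A y` is supported on
`Pa(C)`, where linear independence of the columns of `X` gives `zᵀ S z ≥ κ zᵀ z`, with `κ > 0`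
uniform over the finitely many components. Hence `tr (Σ⁻¹ S) ≥ κ tr Σ⁻¹`, and the eigenvalue
inequality `log det M - κ tr M ≤ -p (log κ + 1)` for positive definite `M` bounds `ℓ(Σ | S)`.
-/

open scoped MatrixOrder Topology

section LinearAlgebra

variable {ι m : Type*} [Fintype ι] [Fintype m]

theorem Matrix.PosSemidef.trace_mul_nonneg {W M : Matrix ι ι ℝ} (hW : W.PosSemidef)
    (hM : M.PosSemidef) : 0 ≤ (W * M).trace := by
  -- `tr (W * M)` is the sum of the entries of `W ⊙ Mᵀ`, which is PSD by Schur's product theorem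
  have := (hW.hadamard hM.transpose).dotProduct_mulVec_nonneg 1
  rw [← transpose_transpose M, ← sum_hadamard_eq]
  simpa [dotProduct, mulVec] using this

variable [DecidableEq ι]

theorem Matrix.exists_pos_mul_dotProduct_le_of_mulVec_injective {M : Matrix m ι ℝ}
    (hM : Function.Injective M.mulVec) :
    ∃ κ : ℝ, 0 < κ ∧ ∀ x : ι → ℝ, κ * (x ⬝ᵥ x) ≤ (M *ᵥ x) ⬝ᵥ (M *ᵥ x) := by
  cases isEmpty_or_nonempty ι
  · exact ⟨1, one_pos, fun x => by simp [Subsingleton.elim x 0]⟩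
  have hG : (Mᴴ * M).PosDef := PosDef.conjTranspose_mul_self M hM
  obtain ⟨κ, hκ, hle⟩ := (CFC.exists_pos_algebraMap_le_iff (a := Mᴴ * M) hG.isHermitian).2
    fun _ hx => hG.isStrictlyPositive.spectrum_pos hx
  refine ⟨κ, hκ, fun x => ?_⟩
  have := (le_iff.1 hle).dotProduct_mulVec_nonneg x
  rw [Algebra.algebraMap_eq_smul_one, sub_mulVec, dotProduct_sub, smul_mulVec, one_mulVec,
    dotProduct_smul, smul_eq_mul, sub_nonneg, star_trivial, ← mulVec_mulVec,
    dotProduct_mulVec, conjTranspose_eq_transpose_of_trivial, vecMul_transpose] at this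
  exact this

theorem Matrix.exists_pos_mul_dotProduct_le_of_linearIndepOn {X : Matrix m ι ℝ} {s : Set ι}
    (hX : LinearIndepOn ℝ X.col s) :
    ∃ κ : ℝ, 0 < κ ∧ ∀ x : ι → ℝ, (∀ i ∉ s, x i = 0) →
      κ * (x ⬝ᵥ x) ≤ (X *ᵥ x) ⬝ᵥ (X *ᵥ x) := by
  classical
  obtain ⟨κ, hκ, hXs⟩ := exists_pos_mul_dotProduct_le_of_mulVec_injective
    (M := X.submatrix id ((↑) : s → ι)) (mulVec_injective_iff.2 hX)
  refine ⟨κ, hκ, fun x hx => ?_⟩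
  have sum_coe : ∀ f : ι → ℝ, (∀ i ∉ s, f i = 0) → ∑ i : s, f i = ∑ i, f i := fun f hf => by
    rw [← Fintype.sum_subtype_add_sum_subtype (· ∈ s) f,
      Finset.sum_eq_zero fun (i : {i // i ∉ s}) _ => hf i i.2, add_zero]
  have hmul : X.submatrix id ((↑) : s → ι) *ᵥ (fun i => x i) = X *ᵥ x := funext fun k =>
    sum_coe (fun i => X k i * x i) fun i hi => by simp [hx i hi]
  have hdot : (fun i : s => x i) ⬝ᵥ (fun i => x i) = x ⬝ᵥ x :=
    sum_coe (fun i => x i * x i) fun i hi => by simp [hx i hi]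
  simpa only [hmul, hdot] using hXs fun i => x i

theorem Matrix.eventually_mul_dotProduct_le_of_linearIndepOn {X : Matrix m ι ℝ} {s : Set ι}
    (hX : LinearIndepOn ℝ X.col s) {c : ℝ} (hc : 0 < c) :
    ∀ᶠ κ in 𝓝[>] (0 : ℝ), ∀ x : ι → ℝ, (∀ i ∉ s, x i = 0) →
      κ * (x ⬝ᵥ x) ≤ x ⬝ᵥ ((c • (Xᵀ * X)) *ᵥ x) := by
  obtain ⟨κ, hκ, hXκ⟩ := exists_pos_mul_dotProduct_le_of_linearIndepOn hX
  filter_upwards [Ioc_mem_nhdsGT (mul_pos hc hκ)] with κ' hκ' x hx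
  calc κ' * (x ⬝ᵥ x) ≤ c * κ * (x ⬝ᵥ x) :=
        mul_le_mul_of_nonneg_right hκ'.2 (dotProduct_self_star_nonneg x)
    _ ≤ c * ((X *ᵥ x) ⬝ᵥ (X *ᵥ x)) := by
        rw [mul_assoc]; exact mul_le_mul_of_nonneg_left (hXκ x hx) hc.le
    _ = x ⬝ᵥ ((c • (Xᵀ * X)) *ᵥ x) := by
        rw [smul_mulVec, dotProduct_smul, smul_eq_mul, ← mulVec_mulVec, dotProduct_mulVec x Xᵀ,
          vecMul_transpose]

end LinearAlgebra

section BlockProjection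

variable {ι β : Type*} [DecidableEq ι] [DecidableEq β] (f : ι → β)

def blockProj (b : β) : Matrix ι ι ℝ :=
  diagonal fun i => if f i = b then 1 else 0

theorem blockProj_transpose (b : β) : (blockProj f b)ᵀ = blockProj f b :=
  diagonal_transpose _

theorem sum_blockProj [Fintype β] : ∑ b, blockProj f b = 1 := by
  ext i j
  simp [blockProj, Matrix.sum_apply, diagonal_apply, one_apply]

variable [Fintype ι]

theorem blockProj_mul_self (b : β) : blockProj f b * blockProj f b = blockProj f b := by
  simp [blockProj, diagonal_mul_diagonal]

theorem blockProj_mulVec_apply (b : β) (x : ι → ℝ) (i : ι) :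
    (blockProj f b *ᵥ x) i = if f i = b then x i else 0 := by
  simp [blockProj, mulVec_diagonal]

variable {f}

theorem commute_blockProj {W : Matrix ι ι ℝ} (hW : ∀ i j, f i ≠ f j → W i j = 0) (b : β) :
    Commute W (blockProj f b) := by
  ext i j
  by_cases hij : f i = f j
  · simp [blockProj, hij]
  · simp [blockProj, hW i j hij]

theorem Commute.nonsing_inv_left {W P : Matrix ι ι ℝ} (hW : IsUnit W) (h : Commute W P) :
    Commute W⁻¹ P := by
  obtain ⟨u, rfl⟩ := hW
  rw [← coe_units_inv]
  exact h.units_inv_left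

theorem posSemidef_blockProj_mul_mul_blockProj {Q : Matrix ι ι ℝ} (hQ : Q.IsHermitian) {b : β}
    (hQb : ∀ x : ι → ℝ, (∀ i, f i ≠ b → x i = 0) → 0 ≤ x ⬝ᵥ (Q *ᵥ x)) :
    (blockProj f b * Q * blockProj f b).PosSemidef := by
  refine .of_dotProduct_mulVec_nonneg ?_ fun x => ?_
  · simpa [conjTranspose_eq_transpose_of_trivial, blockProj_transpose]
      using isHermitian_conjTranspose_mul_mul (blockProj f b) hQ
  · rw [star_trivial, ← mulVec_mulVec, ← mulVec_mulVec, dotProduct_mulVec, ← mulVec_transpose,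
      blockProj_transpose]
    exact hQb _ fun i hi => by simp [blockProj_mulVec_apply, hi]

theorem trace_mul_nonneg_of_commute_blockProj [Fintype β] {W Q : Matrix ι ι ℝ}
    (hW : W.PosSemidef) (hWf : ∀ b, Commute W (blockProj f b))
    (hQ : ∀ b, (blockProj f b * Q * blockProj f b).PosSemidef) : 0 ≤ (W * Q).trace := by
  have hblock (b : β) : (W * Q * blockProj f b).trace =
      (W * (blockProj f b * Q * blockProj f b)).trace := by
    calc (W * Q * blockProj f b).trace
        = (W * Q * blockProj f b * blockProj f b).trace := by
          rw [mul_assoc _ (blockProj f b), blockProj_mul_self]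
      _ = (blockProj f b * W * Q * blockProj f b).trace := by
          rw [trace_mul_comm, ← mul_assoc, ← mul_assoc]
      _ = (W * (blockProj f b * Q * blockProj f b)).trace := by
          rw [← (hWf b).eq]; simp only [mul_assoc]
  calc (0 : ℝ) ≤ ∑ b, (W * (blockProj f b * Q * blockProj f b)).trace :=
        Finset.sum_nonneg fun b _ => hW.trace_mul_nonneg (hQ b)
    _ = (W * Q).trace := by
        simp_rw [← hblock, ← trace_sum, ← Finset.mul_sum, sum_blockProj, mul_one]

end BlockProjection

section Likelihood

variable {ι : Type*} [Fintype ι] [DecidableEq ι]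

theorem Matrix.PosDef.log_det_sub_mul_trace_le {M : Matrix ι ι ℝ} (hM : M.PosDef) {κ : ℝ}
    (hκ : 0 < κ) : Real.log M.det - κ * M.trace ≤ -(Fintype.card ι * (Real.log κ + 1)) := by
  have hev := hM.eigenvalues_pos
  rw [hM.isHermitian.det_eq_prod_eigenvalues, hM.isHermitian.trace_eq_sum_eigenvalues]
  simp only [RCLike.ofReal_real_eq_id, id]
  rw [Real.log_prod fun i _ => (hev i).ne', Finset.mul_sum, ← Finset.sum_sub_distrib,
    ← nsmul_eq_mul, ← Finset.card_univ, ← Finset.sum_const, ← Finset.sum_neg_distrib]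
  refine Finset.sum_le_sum fun i _ => ?_
  have := Real.log_le_sub_one_of_pos (mul_pos hκ (hev i))
  rw [Real.log_mul hκ.ne' (hev i).ne'] at this
  linarith

theorem loglik_eq_log_det_inv_sub (Sig S : Matrix ι ι ℝ) :
    loglik Sig S = Real.log Sig⁻¹.det - (Sig⁻¹ * S).trace := by
  rw [loglik, det_nonsing_inv, Ring.inverse_eq_inv', Real.log_inv]

theorem loglik_le_of_mul_trace_inv_le {Sig S : Matrix ι ι ℝ} (hSig : Sig⁻¹.PosDef) {κ : ℝ}
    (hκ : 0 < κ) (hS : κ * Sig⁻¹.trace ≤ (Sig⁻¹ * S).trace) :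
    loglik Sig S ≤ -(Fintype.card ι * (Real.log κ + 1)) := by
  rw [loglik_eq_log_det_inv_sub]
  linarith [hSig.log_det_sub_mul_trace_le hκ]

end Likelihood

section MixedGraph

variable {ι : Type*} [Fintype ι] [DecidableEq ι] {D : Set (ι × ι)} {B : SimpleGraph ι}

theorem one_sub_mulVec_eq_zero_of_not_mem_Pa {Λ : Matrix ι ι ℝ}
    (hΛ : ∀ i j, (i, j) ∉ D → Λ i j = 0) {C : Set ι} {y : ι → ℝ} (hy : ∀ j ∉ C, y j = 0)
    {k : ι} (hk : k ∉ Pa D C) : ((1 - Λ) *ᵥ y) k = 0 := by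
  have hkC : k ∉ C := fun h => hk (Or.inl h)
  have hΛy : ∀ j, Λ k j * y j = 0 := fun j => by
    by_cases hj : j ∈ C
    · rw [hΛ k j fun hkj => hk (Or.inr ⟨j, hj, hkj⟩), zero_mul]
    · rw [hy j hj, mul_zero]
  rw [sub_mulVec, one_mulVec, Pi.sub_apply, hy k hkC, zero_sub, neg_eq_zero]
  exact Finset.sum_eq_zero fun j _ => hΛy j

theorem exists_inv_eq_of_mem_PDG {Sig : Matrix ι ι ℝ} (hSig : Sig ∈ PDG D B) :
    ∃ Λ ∈ RDreg D, ∃ Ω ∈ PDB B, Sig⁻¹ = (1 - Λ) * Ω⁻¹ * (1 - Λ)ᵀ := by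
  obtain ⟨Λ, hΛ, Ω, hΩ, rfl⟩ := hSig
  have hA : IsUnit (1 - Λ).det := (isUnit_iff_isUnit_det _).1 hΛ.2
  refine ⟨Λ, hΛ, Ω, hΩ, ?_⟩
  rw [Matrix.mul_inv_rev, Matrix.mul_inv_rev, transpose_nonsing_inv,
    nonsing_inv_nonsing_inv _ hA, nonsing_inv_nonsing_inv _ (by rwa [det_transpose]), mul_assoc]

theorem posDef_inv_of_mem_PDG {Sig : Matrix ι ι ℝ} (hSig : Sig ∈ PDG D B) : Sig⁻¹.PosDef := by
  obtain ⟨Λ, hΛ, Ω, hΩ, hinv⟩ := exists_inv_eq_of_mem_PDG hSig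
  have := hΩ.1.inv.conjTranspose_mul_mul_same
    (mulVec_injective_iff_isUnit.2 ((isUnit_transpose _).2 hΛ.2))
  simpa [hinv, conjTranspose_eq_transpose_of_trivial] using this

theorem mul_trace_inv_le_of_mem_PDG {Sig S : Matrix ι ι ℝ} (hSig : Sig ∈ PDG D B)
    (hS : S.IsHermitian) {κ : ℝ}
    (hκ : ∀ v x, (∀ i ∉ Pa D {w | B.Reachable v w}, x i = 0) → κ * (x ⬝ᵥ x) ≤ x ⬝ᵥ (S *ᵥ x)) :
    κ * Sig⁻¹.trace ≤ (Sig⁻¹ * S).trace := by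
  classical
  obtain ⟨Λ, hΛ, Ω, hΩ, hinv⟩ := exists_inv_eq_of_mem_PDG hSig
  set A := 1 - Λ
  set f := B.connectedComponentMk
  have hΩf : ∀ i j, f i ≠ f j → Ω i j = 0 := fun i j hij =>
    hΩ.2 i j (fun h => hij (h ▸ rfl)) fun h => hij (SimpleGraph.ConnectedComponent.eq.2 h.reachable)
  have hQ : ∀ b, (blockProj f b * (Aᵀ * (S - κ • 1) * A) * blockProj f b).PosSemidef := by
    intro b
    refine posSemidef_blockProj_mul_mul_blockProj ?_ fun y hy => ?_
    · simpa [conjTranspose_eq_transpose_of_trivial]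
        using isHermitian_conjTranspose_mul_mul A (hS.sub (isHermitian_one.smul (.all κ)))
    · obtain ⟨v, rfl⟩ := b.exists_rep
      have hAy : ∀ i ∉ Pa D {w | B.Reachable v w}, (A *ᵥ y) i = 0 := fun i hi =>
        one_sub_mulVec_eq_zero_of_not_mem_Pa hΛ.1
          (fun j hj => hy j fun h => hj (SimpleGraph.ConnectedComponent.eq.1 h.symm)) hi
      have := hκ v _ hAy
      rw [← mulVec_mulVec, ← mulVec_mulVec, dotProduct_mulVec, vecMul_transpose]
      generalize A *ᵥ y = z at this ⊢
      rwa [sub_mulVec, dotProduct_sub, smul_mulVec, one_mulVec, dotProduct_smul, smul_eq_mul,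
        sub_nonneg]
  have htrace : (Ω⁻¹ * (Aᵀ * (S - κ • 1) * A)).trace = (Sig⁻¹ * S).trace - κ * Sig⁻¹.trace := by
    calc (Ω⁻¹ * (Aᵀ * (S - κ • 1) * A)).trace = (A * (Ω⁻¹ * Aᵀ * (S - κ • 1))).trace := by
          rw [trace_mul_comm A]; simp only [mul_assoc]
      _ = (Sig⁻¹ * (S - κ • 1)).trace := by rw [hinv]; simp only [mul_assoc]
      _ = (Sig⁻¹ * S).trace - κ * Sig⁻¹.trace := by
          rw [mul_sub, mul_smul_comm, mul_one, trace_sub, trace_smul, smul_eq_mul]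
  have := trace_mul_nonneg_of_commute_blockProj hΩ.1.inv.posSemidef
    (fun b => (commute_blockProj hΩf b).nonsing_inv_left hΩ.1.isUnit) hQ
  linarith

end MixedGraph

theorem loglik_bounded_of_linearIndependent_general (p n : ℕ) (D : Set (Fin p × Fin p))
    (B : SimpleGraph (Fin p))
    (X : Matrix (Fin n) (Fin p) ℝ)
    (hX : ∀ v : Fin p, LinearIndependent ℝ
      (fun i : (Pa D {w | B.Reachable v w}) => (fun s : Fin n => X s i))) :
    (⨆ Sig ∈ PDG D B, (loglik Sig ((n : ℝ)⁻¹ • (Xᵀ * X)) : EReal)) < ⊤ := by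
  set S := (n : ℝ)⁻¹ • (Xᵀ * X)
  have hS : S.IsHermitian :=
    ((posSemidef_conjTranspose_mul_self X).smul (inv_nonneg.2 n.cast_nonneg)).isHermitian
  have hbound (v : Fin p) : ∀ᶠ κ in 𝓝[>] (0 : ℝ), ∀ x : Fin p → ℝ,
      (∀ i ∉ Pa D {w | B.Reachable v w}, x i = 0) → κ * (x ⬝ᵥ x) ≤ x ⬝ᵥ (S *ᵥ x) := by
    -- the column of `v` is a nonzero vector of `ℝⁿ`, so `(n : ℝ)⁻¹` is not the junk `0⁻¹ = 0`
    have hn : 0 < n := Nat.pos_of_ne_zero <| by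
      rintro rfl
      exact (hX v).ne_zero ⟨v, Or.inl .rfl⟩ (Subsingleton.elim _ _)
    exact eventually_mul_dotProduct_le_of_linearIndepOn (hX v) (by positivity)
  obtain ⟨κ, hκS, hκ⟩ := ((Filter.eventually_all.2 hbound).and self_mem_nhdsWithin).exists
  refine (iSup₂_le fun Sig hSig => ?_).trans_lt (EReal.coe_lt_top (-(p * (Real.log κ + 1))))
  refine EReal.coe_le_coe_iff.2 ?_
  simpa using loglik_le_of_mul_trace_inv_le (posDef_inv_of_mem_PDG hSig) hκ
    (mul_trace_inv_le_of_mem_PDG hSig hS hκS)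

/-- If the columns of the data matrix `X` indexed by `Pa(C_j)` are linearly independent
for every connected component `C_j` of the bidirected part of the mixed graph
`G = (V, D, B)`, then the log-likelihood `ℓ(· | (1/n) XᵀX)` is bounded above on `PD(G)`. -/
theorem loglik_bounded_of_linearIndependent (p n : ℕ) (D : Set (Fin p × Fin p))
    (hD : ∀ i, (i, i) ∉ D) (B : SimpleGraph (Fin p))
    (X : Matrix (Fin n) (Fin p) ℝ)
    (hX : ∀ v : Fin p, LinearIndependent ℝ
      (fun i : (Pa D {w | B.Reachable v w}) => (fun s : Fin n => X s i))) :
    (⨆ Sig ∈ PDG D B, (loglik Sig ((n : ℝ)⁻¹ • (Xᵀ * X)) : EReal)) < ⊤ :=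
  loglik_bounded_of_linearIndependent_general p n D B X hX
end
end

section
/- Let G be the mixed graph on V={1,2,3} with directed edges D={(1,2),(2,3)} and bidirected edge set B={{2,3}}. Then PD(G) is exactly the set of positive definite 3×3 matrices Σ=(σ_{ij}) such that σ_{13}=0 whenever σ_{12}=0 (equivalently: σ_{12}=0 implies σ_{13}=0). -/
/-!
Writing `U = I - Λ`, a matrix `Σ` lies in `PD(G)` iff `Ω = Uᵀ Σ U` is positive definite with the
zero pattern of `B` for some admissible `Λ`; congruence by the invertible `U` preserves positive
definiteness, so only the zero pattern matters. Here `Λ` has free entries `λ₁₂, λ₂₃`, and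
`Ω₁₂ = σ₁₂ - λ₁₂ σ₁₁`, `Ω₁₃ = σ₁₃ - λ₂₃ σ₁₂`. Since `σ₁₁ > 0` the first can always be made zero,
and the second can iff `σ₁₂ = 0 → σ₁₃ = 0`.
-/

open Matrix MeasureTheory Filter

noncomputable section

section Congruence

variable {ι R : Type*} [Fintype ι] [DecidableEq ι] [CommRing R]

lemma transpose_conj_inv_conj_cancel {U : Matrix ι ι R} (hU : IsUnit U) (A : Matrix ι ι R) :
    Uᵀ * ((U⁻¹)ᵀ * A * U⁻¹) * U = A := by
  have h : U⁻¹ * U = 1 := nonsing_inv_mul U ((isUnit_iff_isUnit_det U).1 hU)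
  calc Uᵀ * ((U⁻¹)ᵀ * A * U⁻¹) * U = (U⁻¹ * U)ᵀ * A * (U⁻¹ * U) := by
        simp only [transpose_mul, Matrix.mul_assoc]
    _ = A := by simp [h]

lemma inv_conj_transpose_conj_cancel {U : Matrix ι ι R} (hU : IsUnit U) (A : Matrix ι ι R) :
    (U⁻¹)ᵀ * (Uᵀ * A * U) * U⁻¹ = A := by
  have h : U * U⁻¹ = 1 := mul_nonsing_inv U ((isUnit_iff_isUnit_det U).1 hU)
  calc (U⁻¹)ᵀ * (Uᵀ * A * U) * U⁻¹ = (U * U⁻¹)ᵀ * A * (U * U⁻¹) := by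
        simp only [transpose_mul, Matrix.mul_assoc]
    _ = A := by simp [h]

end Congruence

lemma posDef_transpose_mul_mul_iff {ι : Type*} [Fintype ι] [DecidableEq ι]
    {U A : Matrix ι ι ℝ} (hU : IsUnit U) : (Uᵀ * A * U).PosDef ↔ A.PosDef := by
  rw [← conjTranspose_eq_transpose_of_trivial, ← star_eq_conjTranspose]
  exact hU.posDef_star_left_conjugate_iff

lemma mem_PDG_iff {ι : Type*} [Fintype ι] [DecidableEq ι] {D : Set (ι × ι)}
    {B : SimpleGraph ι} {S : Matrix ι ι ℝ} :
    S ∈ PDG D B ↔ ∃ Λ ∈ RDreg D, (1 - Λ)ᵀ * S * (1 - Λ) ∈ PDB B := by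
  constructor
  · rintro ⟨Λ, hΛ, Ω, hΩ, rfl⟩
    exact ⟨Λ, hΛ, by rwa [transpose_conj_inv_conj_cancel hΛ.2]⟩
  · rintro ⟨Λ, hΛ, hΩ⟩
    exact ⟨Λ, hΛ, _, hΩ, (inv_conj_transpose_conj_cancel hΛ.2 S).symm⟩

lemma one_sub_chain (a b : ℝ) :
    1 - !![0, a, 0; 0, 0, b; 0, 0, 0] =
      (!![1, -a, 0; 0, 1, -b; 0, 0, 1] : Matrix (Fin 3) (Fin 3) ℝ) := by
  ext i j
  fin_cases i <;> fin_cases j <;> simp [one_apply]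

lemma isUnit_unitriangular (a b : ℝ) :
    IsUnit (!![1, -a, 0; 0, 1, -b; 0, 0, 1] : Matrix (Fin 3) (Fin 3) ℝ) := by
  rw [isUnit_iff_isUnit_det, det_fin_three]
  simp

lemma mem_RDreg_chain_iff {Λ : Matrix (Fin 3) (Fin 3) ℝ} :
    Λ ∈ RDreg ({((0 : Fin 3), (1 : Fin 3)), ((1 : Fin 3), (2 : Fin 3))} : Set (Fin 3 × Fin 3)) ↔
      ∃ a b : ℝ, Λ = !![0, a, 0; 0, 0, b; 0, 0, 0] := by
  constructor
  · rintro ⟨hΛ, -⟩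
    refine ⟨Λ 0 1, Λ 1 2, ?_⟩
    ext i j
    fin_cases i <;> fin_cases j <;> first | rfl | exact hΛ _ _ (by simp)
  · rintro ⟨a, b, rfl⟩
    refine ⟨fun i j hij => ?_, ?_⟩
    · fin_cases i <;> fin_cases j <;> simp_all
    · rw [one_sub_chain]
      exact isUnit_unitriangular a b

lemma mem_PDG_chain_iff {B : SimpleGraph (Fin 3)} {S : Matrix (Fin 3) (Fin 3) ℝ} :
    S ∈ PDG ({((0 : Fin 3), (1 : Fin 3)), ((1 : Fin 3), (2 : Fin 3))} : Set (Fin 3 × Fin 3)) B ↔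
      ∃ a b : ℝ,
        !![1, -a, 0; 0, 1, -b; 0, 0, 1]ᵀ * S * !![1, -a, 0; 0, 1, -b; 0, 0, 1] ∈ PDB B := by
  rw [mem_PDG_iff]
  constructor
  · rintro ⟨Λ, hΛ, hΩ⟩
    obtain ⟨a, b, rfl⟩ := mem_RDreg_chain_iff.1 hΛ
    exact ⟨a, b, by rwa [one_sub_chain] at hΩ⟩
  · rintro ⟨a, b, hΩ⟩
    exact ⟨_, mem_RDreg_chain_iff.2 ⟨a, b, rfl⟩, by rwa [one_sub_chain]⟩

lemma mem_PDB_fromRel_one_two_iff {Ω : Matrix (Fin 3) (Fin 3) ℝ} :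
    Ω ∈ PDB (SimpleGraph.fromRel fun a b => a = (1 : Fin 3) ∧ b = (2 : Fin 3)) ↔
      Ω.PosDef ∧ Ω 0 1 = 0 ∧ Ω 0 2 = 0 := by
  constructor
  · rintro ⟨hΩ, hzero⟩
    exact ⟨hΩ, hzero 0 1 (by decide) (by simp), hzero 0 2 (by decide) (by simp)⟩
  · rintro ⟨hΩ, h01, h02⟩
    have h10 : Ω 1 0 = 0 := by rw [← hΩ.1.apply]; simp [h01]
    have h20 : Ω 2 0 = 0 := by rw [← hΩ.1.apply]; simp [h02]
    refine ⟨hΩ, fun i j hij hadj => ?_⟩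
    fin_cases i <;> fin_cases j <;> simp_all

lemma transpose_mul_mul_apply_zero_one (a b : ℝ) (S : Matrix (Fin 3) (Fin 3) ℝ) :
    (!![1, -a, 0; 0, 1, -b; 0, 0, 1]ᵀ * S * !![1, -a, 0; 0, 1, -b; 0, 0, 1]) 0 1 =
      S 0 1 - a * S 0 0 := by
  simp [mul_apply, Fin.sum_univ_three, sub_eq_neg_add, mul_comm]

lemma transpose_mul_mul_apply_zero_two (a b : ℝ) (S : Matrix (Fin 3) (Fin 3) ℝ) :
    (!![1, -a, 0; 0, 1, -b; 0, 0, 1]ᵀ * S * !![1, -a, 0; 0, 1, -b; 0, 0, 1]) 0 2 =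
      S 0 2 - b * S 0 1 := by
  simp [mul_apply, Fin.sum_univ_three, sub_eq_neg_add, mul_comm]

lemma exists_mul_eq_and_mul_eq_iff {x y z : ℝ} (hx : x ≠ 0) :
    (∃ a b : ℝ, y = a * x ∧ z = b * y) ↔ (y = 0 → z = 0) := by
  constructor
  · rintro ⟨a, b, -, rfl⟩ rfl
    exact mul_zero b
  · intro h
    exact ⟨y / x, z / y, (div_mul_cancel₀ y hx).symm, (div_mul_cancel_of_imp h).symm⟩

/-- Nodes `1, 2, 3` of the graph are `0, 1, 2 : Fin 3`. -/
theorem pdg_three_node_example :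
    PDG ({((0 : Fin 3), (1 : Fin 3)), ((1 : Fin 3), (2 : Fin 3))} : Set (Fin 3 × Fin 3))
        (SimpleGraph.fromRel fun a b => a = (1 : Fin 3) ∧ b = (2 : Fin 3)) =
      {Sig : Matrix (Fin 3) (Fin 3) ℝ |
        Sig.PosDef ∧ (Sig 0 1 = 0 → Sig 0 2 = 0)} := by
  ext S
  rw [mem_PDG_chain_iff, Set.mem_ofPred_eq]
  simp only [mem_PDB_fromRel_one_two_iff, posDef_transpose_mul_mul_iff (isUnit_unitriangular _ _),
    transpose_mul_mul_apply_zero_one, transpose_mul_mul_apply_zero_two, sub_eq_zero]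
  constructor
  · rintro ⟨a, b, hS, h01, h02⟩
    exact ⟨hS, (exists_mul_eq_and_mul_eq_iff hS.diag_pos.ne').1 ⟨a, b, h01, h02⟩⟩
  · rintro ⟨hS, h⟩
    obtain ⟨a, b, h01, h02⟩ := (exists_mul_eq_and_mul_eq_iff hS.diag_pos.ne').2 h
    exact ⟨a, b, hS, h01, h02⟩

end
end

section
/- Let p ≥ 3, let C_p be the directed p-cycle on V={1,...,p} with edge set D={(i,i+1): i=1,...,p−1} ∪ {(p,1)}, and let C̄_p be the undirected p-cycle with edges {i,i+1} taken modulo p. Then the inclusion PD(C_p) ⊆ PD(C̄_p)^{-1} is strict: there exists a positive definite p×p matrix Σ with Σ^{-1} ∈ PD(C̄_p) such that Σ ∉ PD(C_p). -/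
open Matrix MeasureTheory Filter

noncomputable section

/-!
If `Σ ∈ PD(C_p)`, then `Σ⁻¹ = (I - Λ) W (I - Λ)ᵀ` with `W = diag w` positive and `I - Λ` having
unit diagonal and only one further entry `-λ_i` in each row, at `(i, i + 1)`. Hence `Σ⁻¹` has
diagonal entries `w_i + λ_i² w_{i+1}` and superdiagonal entries `-λ_i w_{i+1}`, and AM-GM gives
`(2 Σ⁻¹_{i,i+1})² w_i ≤ (Σ⁻¹_{ii})² w_{i+1}`; multiplying around the cycle, the `w`'s cancel and
`∏ (2 Σ⁻¹_{i,i+1})² ≤ ∏ (Σ⁻¹_{ii})²`.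

A positive definite `K` supported on the undirected cycle violates this. Let
`(Bx)_i = x_{i+1} - x_i` except at the last edge, where the sign is flipped. Going once around the cycle multiplies a kernel
vector of `B` by `-1`, so `B` is injective and `BᵀB ≥ c I` for some `c > 0`. The matrix `½ BᵀB` has
unit diagonal and superdiagonal entries `±1/2`, so it attains equality in the inequality above;
enlarging one superdiagonal entry by a small `δ > 0` keeps it positive definite and makes the
product `(1 + 2δ)² > 1`. Then `Σ = K⁻¹` is the required matrix.
-/

theorem dotProduct_self_eq_norm_toLp_sq {n : Type*} [Fintype n] (y : n → ℝ) :
    y ⬝ᵥ y = ‖WithLp.toLp 2 y‖ ^ 2 := by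
  rw [← real_inner_self_eq_norm_sq, EuclideanSpace.inner_toLp_toLp, star_trivial]

theorem Matrix.exists_pos_mul_dotProduct_self_le {m n : Type*} [Fintype m] [Fintype n]
    [DecidableEq n] (B : Matrix m n ℝ) (hB : Function.Injective B.mulVec) :
    ∃ c > 0, ∀ x : n → ℝ, c * (x ⬝ᵥ x) ≤ B *ᵥ x ⬝ᵥ B *ᵥ x := by
  have hinj : Function.Injective (toEuclideanLin B) := fun x y h =>
    WithLp.ofLp_injective 2 (hB (by simpa using congrArg WithLp.ofLp h))
  obtain ⟨K, hK, hanti⟩ :=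
    (toEuclideanLin B).exists_antilipschitzWith (LinearMap.ker_eq_bot.mpr hinj)
  refine ⟨1 / (K : ℝ) ^ 2, by positivity, fun x => ?_⟩
  have hbound : ‖WithLp.toLp 2 x‖ ≤ K * ‖WithLp.toLp 2 (B *ᵥ x)‖ :=
    ZeroHomClass.bound_of_antilipschitz _ hanti _
  rw [dotProduct_self_eq_norm_toLp_sq, dotProduct_self_eq_norm_toLp_sq, div_mul_eq_mul_div, one_mul,
    div_le_iff₀ (by positivity)]
  calc ‖WithLp.toLp 2 x‖ ^ 2 ≤ (K * ‖WithLp.toLp 2 (B *ᵥ x)‖) ^ 2 := by gcongr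
    _ = _ := by ring

theorem Fintype.prod_le_prod_of_mul_le_mul_perm {ι : Type*} [Fintype ι] (σ : Equiv.Perm ι)
    {f g w : ι → ℝ} (hf : ∀ i, 0 ≤ f i) (hw : ∀ i, 0 < w i)
    (h : ∀ i, f i * w i ≤ g i * w (σ i)) : ∏ i, f i ≤ ∏ i, g i := by
  have hprod : (∏ i, f i) * ∏ i, w i ≤ (∏ i, g i) * ∏ i, w i := by
    calc (∏ i, f i) * ∏ i, w i = ∏ i, f i * w i := Finset.prod_mul_distrib.symm
      _ ≤ ∏ i, g i * w (σ i) :=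
        Finset.prod_le_prod (fun i _ => mul_nonneg (hf i) (hw i).le) fun i _ => h i
      _ = (∏ i, g i) * ∏ i, w i := by rw [Finset.prod_mul_distrib, Equiv.prod_comp]
  exact le_of_mul_le_mul_right hprod (Finset.prod_pos fun i _ => hw i)

theorem inv_eq_of_mem_PDG_bot {ι : Type*} [Fintype ι] [DecidableEq ι] {D : Set (ι × ι)}
    {Sig : Matrix ι ι ℝ} (h : Sig ∈ PDG D ⊥) :
    ∃ Λ ∈ RDreg D, ∃ w : ι → ℝ, (∀ i, 0 < w i) ∧
      Sig⁻¹ = (1 - Λ) * diagonal w * (1 - Λ)ᵀ := by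
  obtain ⟨Λ, hΛ, Ω, ⟨hΩ, hΩoff⟩, rfl⟩ := h
  have hdiag : diagonal Ω.diag = Ω := IsDiag.diagonal_diag fun i j hij => hΩoff i j hij (by simp)
  have hpos (i : ι) : 0 < Ω i i := hΩ.diag_pos
  have hΩinv : Ω⁻¹ = diagonal Ω.diag⁻¹ := inv_eq_left_inv <| by
    nth_rw 2 [← hdiag]
    rw [diagonal_mul_diagonal, ← diagonal_one]
    exact congrArg diagonal (funext fun i => inv_mul_cancel₀ (hpos i).ne')
  have hA : IsUnit (1 - Λ).det := (isUnit_iff_isUnit_det _).mp hΛ.2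
  have hAt : IsUnit (1 - Λ)ᵀ.det := by rwa [det_transpose]
  refine ⟨Λ, hΛ, Ω.diag⁻¹, fun i => inv_pos.mpr (hpos i), ?_⟩
  rw [Matrix.mul_inv_rev, Matrix.mul_inv_rev, nonsing_inv_nonsing_inv _ hA, transpose_nonsing_inv,
    nonsing_inv_nonsing_inv _ hAt, hΩinv, mul_assoc]

section FinArith

variable {p : ℕ} [NeZero p]

theorem Fin.self_ne_add_one_of_two_le (hp : 2 ≤ p) (i : Fin p) : i ≠ i + 1 := by
  rw [Ne, left_eq_add, Fin.ext_iff, Fin.val_one', Nat.one_mod_eq_one.mpr (by omega), Fin.val_zero]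
  omega

theorem Fin.self_ne_add_one_add_one (hp : 3 ≤ p) (i : Fin p) : i ≠ i + 1 + 1 := by
  rw [Ne, add_assoc, left_eq_add, Fin.ext_iff, Fin.val_add, Fin.val_one',
    Nat.one_mod_eq_one.mpr (by omega), Fin.val_zero, Nat.mod_eq_of_lt (by omega)]
  omega

end FinArith

namespace DirectedCycle

variable {p : ℕ} [NeZero p]

def cycleMatrix (a : Fin p → ℝ) : Matrix (Fin p) (Fin p) ℝ :=
  of fun i j => (if i = j then 1 else 0) + (if j = i + 1 then a i else 0) +
    (if i = j + 1 then a j else 0)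

theorem cycleMatrix_isHermitian (a : Fin p → ℝ) : (cycleMatrix a).IsHermitian := by
  ext i j
  simp only [conjTranspose_apply, star_trivial, cycleMatrix, of_apply, eq_comm (a := j) (b := i)]
  ring

theorem cycleMatrix_apply_self (hp : 2 ≤ p) (a : Fin p → ℝ) (i : Fin p) :
    cycleMatrix a i i = 1 := by
  simp [cycleMatrix, show p ≠ 1 by omega]

theorem cycleMatrix_apply_add_one (hp : 3 ≤ p) (a : Fin p → ℝ) (i : Fin p) :
    cycleMatrix a i (i + 1) = a i := by
  simp [cycleMatrix, Fin.self_ne_add_one_of_two_le (by omega) i, Fin.self_ne_add_one_add_one hp i]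

theorem cycleMatrix_apply_of_not_adj (a : Fin p → ℝ) {i j : Fin p} (hij : i ≠ j)
    (hj : j ≠ i + 1) (hi : i ≠ j + 1) : cycleMatrix a i j = 0 := by
  simp [cycleMatrix, hij, hj, hi]

theorem dotProduct_cycleMatrix_mulVec (a x : Fin p → ℝ) :
    x ⬝ᵥ cycleMatrix a *ᵥ x = ∑ i, (x i ^ 2 + 2 * a i * x i * x (i + 1)) := by
  simp only [dotProduct, mulVec, cycleMatrix, of_apply, add_mul, ite_mul, zero_mul,
    Finset.sum_add_distrib, Finset.sum_ite_eq, Finset.sum_ite_eq', Finset.mem_univ, if_true,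
    mul_add, Finset.mul_sum, mul_ite, mul_zero]
  rw [Finset.sum_comm (f := fun i j => if i = j + 1 then x i * (a j * x j) else 0)]
  simp only [Finset.sum_ite_eq', Finset.mem_univ, if_true, ← Finset.sum_add_distrib]
  refine Finset.sum_congr rfl fun i _ => ?_
  ring

def cycleSign (i : Fin p) : ℝ := if i = -1 then -1 else 1

def twistedDifference : Matrix (Fin p) (Fin p) ℝ :=
  of fun i j => (if j = i + 1 then 1 else 0) - if j = i then cycleSign i else 0

theorem twistedDifference_mulVec (x : Fin p → ℝ) (i : Fin p) :
    (twistedDifference *ᵥ x) i = x (i + 1) - cycleSign i * x i := by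
  simp [twistedDifference, mulVec, dotProduct, sub_mul, Finset.sum_sub_distrib, ite_mul]

theorem twistedDifference_mulVec_injective :
    Function.Injective (twistedDifference (p := p)).mulVec := by
  suffices h : ∀ z : Fin p → ℝ, twistedDifference *ᵥ z = 0 → z = 0 from fun x y hxy =>
    sub_eq_zero.mp (h _ (by rw [mulVec_sub, hxy, sub_self]))
  intro z hz
  have hstep (i : Fin p) : z (i + 1) = cycleSign i * z i :=
    sub_eq_zero.mp ((twistedDifference_mulVec z i).symm.trans (congrFun hz i))
  obtain ⟨n, rfl⟩ := Nat.exists_eq_add_one_of_ne_zero (NeZero.ne p)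
  have hconst (i : Fin (n + 1)) : z i = z 0 := by
    induction i using Fin.induction with
    | zero => rfl
    | succ i ih =>
      have hi : i.castSucc ≠ -1 := by
        rw [← Fin.neg_last, neg_neg]
        exact Fin.castSucc_ne_last i
      rw [← Fin.coeSucc_eq_succ, hstep, cycleSign, if_neg hi, one_mul, ih]
  have hlast := hstep (Fin.last n)
  rw [Fin.last_add_one, cycleSign, if_pos (by simp [eq_neg_iff_add_eq_zero]),
    hconst (Fin.last n)] at hlast
  funext i
  rw [hconst i, Pi.zero_apply]
  linarith

def cycleWeight (δ : ℝ) (i : Fin p) : ℝ := if i = -1 then 1 / 2 + δ else -1 / 2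

theorem dotProduct_cycleMatrix_cycleWeight_mulVec (δ : ℝ) (x : Fin p → ℝ) :
    x ⬝ᵥ cycleMatrix (cycleWeight δ) *ᵥ x =
      (twistedDifference *ᵥ x ⬝ᵥ twistedDifference *ᵥ x) / 2 + 2 * δ * x (-1) * x 0 := by
  have hshift : ∑ i, x (i + 1) ^ 2 = ∑ i, x i ^ 2 :=
    Equiv.sum_comp (Equiv.addRight 1) fun i => x i ^ 2
  have hterm (i : Fin p) : x i ^ 2 + 2 * cycleWeight δ i * x i * x (i + 1) =
      (twistedDifference *ᵥ x) i * (twistedDifference *ᵥ x) i / 2 + (x i ^ 2 - x (i + 1) ^ 2) / 2 +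
        if i = -1 then 2 * δ * x (-1) * x 0 else 0 := by
    rw [twistedDifference_mulVec, cycleWeight, cycleSign]
    split_ifs with h
    · rw [h, neg_add_cancel]
      ring
    · ring
  rw [dotProduct_cycleMatrix_mulVec, Finset.sum_congr rfl fun i _ => hterm i,
    Finset.sum_add_distrib, Finset.sum_add_distrib, Finset.sum_ite_eq', ← Finset.sum_div,
    ← Finset.sum_div, Finset.sum_sub_distrib, hshift, sub_self, dotProduct]
  simp

theorem exists_posDef_cycleMatrix_cycleWeight :
    ∃ δ > 0, (cycleMatrix (cycleWeight (p := p) δ)).PosDef := by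
  obtain ⟨c, hc, hB⟩ :=
    (twistedDifference (p := p)).exists_pos_mul_dotProduct_self_le
      twistedDifference_mulVec_injective
  refine ⟨c / 8, by positivity,
    .of_dotProduct_mulVec_pos (cycleMatrix_isHermitian _) fun x hx => ?_⟩
  have hsq (k : Fin p) : x k ^ 2 ≤ x ⬝ᵥ x := by
    simpa [dotProduct, sq] using
      Finset.single_le_sum (fun i _ => mul_self_nonneg (x i)) (Finset.mem_univ k)
  have hpos : 0 < x ⬝ᵥ x := by simpa using dotProduct_self_star_pos_iff.mpr hx
  rw [star_trivial, dotProduct_cycleMatrix_cycleWeight_mulVec]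
  nlinarith [hB x, hsq 0, hsq (-1), sq_nonneg (x (-1) + x 0)]

theorem prod_sq_two_mul_cycleWeight (δ : ℝ) :
    ∏ i, (2 * cycleWeight (p := p) δ i) ^ 2 = (1 + 2 * δ) ^ 2 := by
  have hterm (i : Fin p) : (2 * cycleWeight δ i) ^ 2 = if i = -1 then (1 + 2 * δ) ^ 2 else 1 := by
    rw [cycleWeight]
    split_ifs <;> ring
  simp [hterm]

theorem one_sub_apply_of_mem_RDreg_cycle {Λ : Matrix (Fin p) (Fin p) ℝ}
    (hΛ : Λ ∈ RDreg {x : Fin p × Fin p | x.2 = x.1 + 1}) {i j : Fin p} (hj : j ≠ i + 1) :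
    (1 - Λ) i j = if i = j then 1 else 0 := by
  rw [Matrix.sub_apply, hΛ.1 i j hj, sub_zero, one_apply]

theorem mul_diagonal_mul_transpose_apply_self (hp : 3 ≤ p) {Λ : Matrix (Fin p) (Fin p) ℝ}
    (hΛ : Λ ∈ RDreg {x : Fin p × Fin p | x.2 = x.1 + 1}) (w : Fin p → ℝ) (i : Fin p) :
    ((1 - Λ) * diagonal w * (1 - Λ)ᵀ : Matrix (Fin p) (Fin p) ℝ) i i =
      w i + Λ i (i + 1) ^ 2 * w (i + 1) := by
  have hi := Fin.self_ne_add_one_of_two_le (by omega) i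
  rw [mul_apply, Fintype.sum_eq_add i (i + 1) hi]
  · simp only [mul_diagonal, transpose_apply, one_sub_apply_of_mem_RDreg_cycle hΛ hi,
      ↓reduceIte, Matrix.sub_apply, one_apply_ne hi, zero_sub]
    ring
  · rintro k ⟨hki, hk⟩
    simp [one_sub_apply_of_mem_RDreg_cycle hΛ hk, Ne.symm hki]

theorem mul_diagonal_mul_transpose_apply_add_one (hp : 3 ≤ p) {Λ : Matrix (Fin p) (Fin p) ℝ}
    (hΛ : Λ ∈ RDreg {x : Fin p × Fin p | x.2 = x.1 + 1}) (w : Fin p → ℝ) (i : Fin p) :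
    ((1 - Λ) * diagonal w * (1 - Λ)ᵀ : Matrix (Fin p) (Fin p) ℝ) i (i + 1) =
      -Λ i (i + 1) * w (i + 1) := by
  have hi := Fin.self_ne_add_one_of_two_le (by omega) i
  have hi' := Fin.self_ne_add_one_add_one hp i
  rw [mul_apply, Fintype.sum_eq_add i (i + 1) hi]
  · simp [one_sub_apply_of_mem_RDreg_cycle hΛ hi, one_sub_apply_of_mem_RDreg_cycle hΛ hi',
      one_sub_apply_of_mem_RDreg_cycle hΛ (Fin.self_ne_add_one_of_two_le (by omega) (i + 1)),
      show p ≠ 1 by omega]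
  · rintro k ⟨hki, hk⟩
    simp [one_sub_apply_of_mem_RDreg_cycle hΛ hk, Ne.symm hki]

theorem prod_sq_two_mul_inv_apply_add_one_le (hp : 3 ≤ p) {Sig : Matrix (Fin p) (Fin p) ℝ}
    (h : Sig ∈ PDG {x : Fin p × Fin p | x.2 = x.1 + 1} ⊥) :
    ∏ i, (2 * Sig⁻¹ i (i + 1)) ^ 2 ≤ ∏ i, Sig⁻¹ i i ^ 2 := by
  obtain ⟨Λ, hΛ, w, hw, hinv⟩ := inv_eq_of_mem_PDG_bot h
  refine Fintype.prod_le_prod_of_mul_le_mul_perm (Equiv.addRight 1) (fun i => sq_nonneg _) hw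
    fun i => ?_
  rw [hinv, mul_diagonal_mul_transpose_apply_self hp hΛ,
    mul_diagonal_mul_transpose_apply_add_one hp hΛ, Equiv.coe_addRight]
  nlinarith [mul_nonneg (hw (i + 1)).le (sq_nonneg (w i - Λ i (i + 1) ^ 2 * w (i + 1)))]

end DirectedCycle

/-- The inclusion `PD(C_p) ⊆ PD(C̄_p)⁻¹` is strict:  there is a positive definite matrix
`Σ` whose inverse is supported over the undirected `p`-cycle (edges `{i, i+1}` mod `p`)
but which does not lie in `PD(C_p)` for the directed `p`-cycle. -/
theorem directed_cycle_strict_inclusion (p : ℕ) [NeZero p] (hp : 3 ≤ p) :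
    ∃ Sig : Matrix (Fin p) (Fin p) ℝ, Sig.PosDef ∧
      Sig⁻¹.PosDef ∧
      (∀ i j : Fin p, i ≠ j → j ≠ i + 1 → i ≠ j + 1 → Sig⁻¹ i j = 0) ∧
      Sig ∉ PDG {x : Fin p × Fin p | x.2 = x.1 + 1} (⊥ : SimpleGraph (Fin p)) := by
  obtain ⟨δ, hδ, hK⟩ := DirectedCycle.exists_posDef_cycleMatrix_cycleWeight (p := p)
  have hKinv := nonsing_inv_nonsing_inv _ hK.det_pos.ne'.isUnit
  refine ⟨_, hK.inv, by rwa [hKinv], fun i j hij hj hi => ?_, fun hmem => ?_⟩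
  · rw [hKinv]
    exact DirectedCycle.cycleMatrix_apply_of_not_adj _ hij hj hi
  · have h := DirectedCycle.prod_sq_two_mul_inv_apply_add_one_le hp hmem
    simp only [hKinv, DirectedCycle.cycleMatrix_apply_self (by omega : 2 ≤ p),
      DirectedCycle.cycleMatrix_apply_add_one hp, DirectedCycle.prod_sq_two_mul_cycleWeight,
      one_pow, Finset.prod_const_one] at h
    nlinarith

end
end

section
/- Let S be a positive definite p×p real matrix. Then for every positive definite p×p matrix Σ, ℓ(Σ|S) = −log det Σ − trace(Σ^{-1} S) ≤ −log det S − p, with equality if and only if Σ = S. Conversely, if S is positive semidefinite but singular, then Σ ↦ ℓ(Σ|S) is unbounded above on the cone of positive definite p×p matrices. -/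
/-!
Factor `S = Bᴴ B` with `B` invertible. Then `ℓ(Σ|S) + log det S = log det M - trace M` for the
positive definite `M = B Σ⁻¹ Bᴴ`, and in terms of the eigenvalues `λᵢ > 0` of `M`,
`trace M - p - log det M = ∑ (λᵢ - 1 - log λᵢ) ≥ 0`, with equality iff every `λᵢ = 1`, i.e.
`M = 1`, i.e. `Σ = S`.

If `S` is singular, pick `v ≠ 0` with `vᵀ S = 0` and let `Σₜ` shrink the direction of `v` by a
factor `t > 0`. Then `Σₜ⁻¹ S = S`, so `ℓ(Σₜ|S) = -log t - trace S → ∞` as `t → 0`.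
-/

open Matrix MeasureTheory Filter

noncomputable section

namespace Matrix

section

variable {n : Type*} [Fintype n] [DecidableEq n]

theorem IsHermitian.eq_one_of_eigenvalues_eq_one {𝕜 : Type*} [RCLike 𝕜] {A : Matrix n n 𝕜}
    (hA : A.IsHermitian) (h : hA.eigenvalues = 1) : A = 1 := by
  rw [hA.spectral_theorem, h]
  simp

theorem mul_inv_mul_conjTranspose_eq_one_iff {K : Type*} [Field K] [StarRing K]
    {B Sig : Matrix n n K} (hB : IsUnit B) (hSig : IsUnit Sig) :
    B * Sig⁻¹ * Bᴴ = 1 ↔ Sig = Bᴴ * B := by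
  lift B to (Matrix n n K)ˣ using hB
  lift Sig to (Matrix n n K)ˣ using hSig
  rw [← coe_units_inv, ← star_eq_conjTranspose, ← Units.coe_star, ← Units.val_mul,
    ← Units.val_mul, ← Units.val_mul, Units.val_eq_one, Units.val_inj, mul_assoc,
    mul_eq_one_iff_eq_inv, _root_.mul_inv_rev, inv_inv, eq_inv_mul_iff_mul_eq, eq_comm]

namespace PosDef

variable {M : Matrix n n ℝ}

theorem trace_sub_card_sub_log_det (hM : M.PosDef) :
    M.trace - Fintype.card n - Real.log M.det =
      ∑ i, (hM.1.eigenvalues i - 1 - Real.log (hM.1.eigenvalues i)) := by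
  rw [hM.1.trace_eq_sum_eigenvalues, hM.1.det_eq_prod_eigenvalues]
  simp only [RCLike.ofReal_real_eq_id, id]
  rw [Real.log_prod fun i _ => (hM.eigenvalues_pos i).ne']
  simp [Finset.sum_sub_distrib]

theorem log_det_le_trace_sub_card (hM : M.PosDef) :
    Real.log M.det ≤ M.trace - Fintype.card n := by
  have hsum := hM.trace_sub_card_sub_log_det
  have := Finset.sum_nonneg fun i (_ : i ∈ Finset.univ) =>
    sub_nonneg.2 (Real.log_le_sub_one_of_pos (hM.eigenvalues_pos i))
  linarith

theorem log_det_eq_trace_sub_card_iff (hM : M.PosDef) :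
    Real.log M.det = M.trace - Fintype.card n ↔ M = 1 := by
  refine ⟨fun h => hM.1.eq_one_of_eigenvalues_eq_one (funext fun i => ?_), ?_⟩
  · have hsum := hM.trace_sub_card_sub_log_det
    rw [← h, sub_self, eq_comm, Finset.sum_eq_zero_iff_of_nonneg fun i _ =>
      sub_nonneg.2 (Real.log_le_sub_one_of_pos (hM.eigenvalues_pos i))] at hsum
    by_contra hne
    have := hsum i (Finset.mem_univ i)
    linarith [Real.log_lt_sub_one_of_pos (hM.eigenvalues_pos i) hne]
  · rintro rfl
    simp

end PosDef

end

theorem det_one_add_vecMulVec_s19 {n R : Type*} [Fintype n] [DecidableEq n] [CommRing R]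
    (u v : n → R) : (1 + vecMulVec u v).det = 1 + v ⬝ᵥ u := by
  rw [vecMulVec_eq Unit, det_one_add_replicateCol_mul_replicateRow]

theorem isIdempotentElem_vecMulVec {n R : Type*} [Fintype n] [CommSemiring R] {u v : n → R}
    (h : v ⬝ᵥ u = 1) : IsIdempotentElem (vecMulVec u v) := by
  rw [IsIdempotentElem, vecMulVec_mul_vecMulVec, h, one_smul]

section ScaleAlong

variable {n K : Type*} [DecidableEq n] [Field K] {P : Matrix n n K}

/-- For idempotent `P`, this scales the range of `P` by `t` and fixes the kernel of `P`. -/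
def scaleAlong (P : Matrix n n K) (t : K) : Matrix n n K :=
  1 - (1 - t) • P

theorem scaleAlong_one : scaleAlong P 1 = 1 := by
  simp [scaleAlong]

variable [Fintype n]

theorem scaleAlong_mul_scaleAlong (hP : IsIdempotentElem P) (s t : K) :
    scaleAlong P s * scaleAlong P t = scaleAlong P (s * t) := by
  simp only [scaleAlong, sub_mul, mul_sub, Matrix.one_mul, Matrix.mul_one, smul_mul_smul_comm,
    hP.eq]
  module

theorem inv_scaleAlong (hP : IsIdempotentElem P) {t : K} (ht : t ≠ 0) :
    (scaleAlong P t)⁻¹ = scaleAlong P t⁻¹ :=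
  inv_eq_right_inv (by rw [scaleAlong_mul_scaleAlong hP, mul_inv_cancel₀ ht, scaleAlong_one])

theorem scaleAlong_mul_of_mul_eq_zero {S : Matrix n n K} (h : P * S = 0) (t : K) :
    scaleAlong P t * S = S := by
  rw [scaleAlong, sub_mul, smul_mul_assoc, h, smul_zero, Matrix.one_mul, sub_zero]

theorem det_scaleAlong_vecMulVec {u v : n → K} (h : v ⬝ᵥ u = 1) (t : K) :
    (scaleAlong (vecMulVec u v) t).det = t := by
  rw [scaleAlong, sub_eq_add_neg, ← neg_smul, ← smul_vecMulVec, det_one_add_vecMulVec_s19,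
    dotProduct_smul, h]
  simp

end ScaleAlong

theorem posDef_scaleAlong {n : Type*} [Fintype n] [DecidableEq n] {P : Matrix n n ℝ}
    (hP : IsIdempotentElem P) (hPh : P.IsHermitian) {t : ℝ} (ht : 0 < t) :
    (scaleAlong P t).PosDef := by
  have hsq : scaleAlong P √t * scaleAlong P √t = scaleAlong P t := by
    rw [scaleAlong_mul_scaleAlong hP, Real.mul_self_sqrt ht.le]
  have hunit : IsUnit (scaleAlong P √t) := .of_mul_eq_one (scaleAlong P (√t)⁻¹) <| by
    rw [scaleAlong_mul_scaleAlong hP, mul_inv_cancel₀ (Real.sqrt_pos.2 ht).ne', scaleAlong_one]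
  have hherm : (scaleAlong P √t)ᴴ = scaleAlong P √t := by
    rw [scaleAlong, conjTranspose_sub, conjTranspose_one, conjTranspose_smul, hPh.eq, star_trivial]
  have := (IsUnit.posDef_star_left_conjugate_iff hunit (x := 1)).mpr PosDef.one
  rwa [Matrix.mul_one, star_eq_conjTranspose, hherm, hsq] at this

end Matrix

section Loglik

variable {n : Type*} [Fintype n] [DecidableEq n] {S Sig : Matrix n n ℝ}

theorem loglik_conjTranspose_mul_self {B : Matrix n n ℝ} (hB : IsUnit B) (hSig : IsUnit Sig) :
    loglik Sig (Bᴴ * B) = Real.log (B * Sig⁻¹ * Bᴴ).det - (B * Sig⁻¹ * Bᴴ).trace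
      - Real.log (Bᴴ * B).det := by
  have hdetB : B.det ≠ 0 := (isUnit_iff_isUnit_det B).mp hB |>.ne_zero
  have hdetSig : Sig.det ≠ 0 := (isUnit_iff_isUnit_det Sig).mp hSig |>.ne_zero
  have hdet : (B * Sig⁻¹ * Bᴴ).det = (Bᴴ * B).det * Sig.det⁻¹ := by
    rw [det_mul, det_mul, det_mul, det_nonsing_inv, Ring.inverse_eq_inv']
    ring
  have htrace : (B * Sig⁻¹ * Bᴴ).trace = (Sig⁻¹ * (Bᴴ * B)).trace := by
    rw [trace_mul_cycle, trace_mul_comm]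
  rw [loglik, hdet, htrace, Real.log_mul (by simpa using hdetB) (inv_ne_zero hdetSig),
    Real.log_inv]
  ring

open scoped MatrixOrder in
theorem loglik_le_and_eq_iff (hS : S.PosDef) (hSig : Sig.PosDef) :
    loglik Sig S ≤ -Real.log S.det - Fintype.card n ∧
      (loglik Sig S = -Real.log S.det - Fintype.card n ↔ Sig = S) := by
  obtain ⟨B, hB, rfl⟩ :=
    CStarAlgebra.isStrictlyPositive_iff_eq_star_mul_self.mp hS.isStrictlyPositive
  rw [star_eq_conjTranspose, loglik_conjTranspose_mul_self hB hSig.isUnit,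
    ← mul_inv_mul_conjTranspose_eq_one_iff hB hSig.isUnit]
  have hM : (B * Sig⁻¹ * Bᴴ).PosDef :=
    (IsUnit.posDef_star_right_conjugate_iff hB).mpr hSig.inv
  constructor
  · linarith [hM.log_det_le_trace_sub_card]
  · rw [← hM.log_det_eq_trace_sub_card_iff]
    constructor <;> intro h <;> linarith

theorem loglik_scaleAlong_vecMulVec {u v : n → ℝ} (h : v ⬝ᵥ u = 1) (hvS : v ᵥ* S = 0)
    {t : ℝ} (ht : t ≠ 0) : loglik (scaleAlong (vecMulVec u v) t) S = -Real.log t - S.trace := by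
  have hP := isIdempotentElem_vecMulVec h
  rw [loglik, det_scaleAlong_vecMulVec h, inv_scaleAlong hP ht,
    scaleAlong_mul_of_mul_eq_zero (by rw [vecMulVec_mul, hvS, vecMulVec_zero])]

theorem iSup_loglik_eq_top_of_det_eq_zero (hS : S.det = 0) :
    (⨆ Sig ∈ {A : Matrix n n ℝ | A.PosDef}, (loglik Sig S : EReal)) = ⊤ := by
  obtain ⟨v, hv, hvS⟩ := exists_vecMul_eq_zero_iff.mpr hS
  set u := (v ⬝ᵥ v)⁻¹ • v
  have hvu : v ⬝ᵥ u = 1 := by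
    rw [dotProduct_smul, smul_eq_mul, inv_mul_cancel₀ (dotProduct_self_eq_zero.not.mpr hv)]
  have hherm : (vecMulVec u v).IsHermitian := by
    simp [IsHermitian, u, smul_vecMulVec]
  refine (EReal.eq_top_iff_forall_lt _).mpr fun y => ?_
  set t := Real.exp (-(y + S.trace + 1))
  have hloglik : loglik (scaleAlong (vecMulVec u v) t) S = y + 1 := by
    rw [loglik_scaleAlong_vecMulVec hvu hvS (Real.exp_pos _).ne', Real.log_exp]
    ring
  calc (y : EReal) < (loglik (scaleAlong (vecMulVec u v) t) S : EReal) := by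
        rw [hloglik, EReal.coe_lt_coe_iff]; linarith
    _ ≤ _ := le_biSup (fun Sig => (loglik Sig S : EReal))
        (posDef_scaleAlong (isIdempotentElem_vecMulVec hvu) hherm (Real.exp_pos _))

end Loglik

/-- If `S` is positive definite, then `ℓ(Σ|S) ≤ -log det S - p` for every positive
definite `Σ`, with equality if and only if `Σ = S`.  If instead `S` is positive
semidefinite and singular, then `ℓ(·|S)` is unbounded above on the positive definite
cone. -/
theorem loglik_max_at_sample_covariance (p : ℕ) (S : Matrix (Fin p) (Fin p) ℝ) :
    (S.PosDef → ∀ Sig : Matrix (Fin p) (Fin p) ℝ, Sig.PosDef →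
      loglik Sig S ≤ -Real.log S.det - p ∧
      (loglik Sig S = -Real.log S.det - p ↔ Sig = S)) ∧
    (S.PosSemidef → ¬ IsUnit S.det →
      (⨆ Sig ∈ {A : Matrix (Fin p) (Fin p) ℝ | A.PosDef},
        (loglik Sig S : EReal)) = ⊤) := by
  refine ⟨fun hS Sig hSig => ?_, fun _ hS => ?_⟩
  · simpa only [Fintype.card_fin] using loglik_le_and_eq_iff hS hSig
  · exact iSup_loglik_eq_top_of_det_eq_zero (by simpa [isUnit_iff_ne_zero] using hS)

end
end
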